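/- arXiv:math/0407096 — 6 statements merged into one kernel-verified Lean document; each statement's English description precedes it below -/
import Mathlib

section
/- Let π : G̃ → G be a surjective group homomorphism, let G have a partial action on a set T, let X be a generating subset of G̃, and suppose there exists a map f : T → G̃ such that f(t•π(x)) = f(t)·x holds for every x ∈ X and every t ∈ T for which t•π(x) is defined. Then π is an isomorphism. -/
/-!
A kernel element `g` of `π` is a product `x₁ ⋯ xₙ` of generators and their inverses. Choose
`t ∈ T` at which all partial products `π (x₁ ⋯ xₖ)` act (PA₃). Walking from `t` along these
partial products, each step multiplies the value of `f` on the right by the next `xₖ`, so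
`f (t • π g) = f t * g`. But `t • π g = t • 1 = t`, hence `g = 1`.
-/

/-- A partial (right) action of a group `G` on a set `T`. -/
structure PartialAction (G : Type*) (T : Type*) [Group G] where
  act : T → G → Option T
  inj : ∀ (g : G) (t₁ t₂ u : T), act t₁ g = some u → act t₂ g = some u → t₁ = t₂
  pa1 : ∀ t : T, act t 1 = some t
  pa2 : ∀ (g h : G) (t t' : T), act t g = some t' → act t' h = act t (g * h)
  pa3 : ∀ L : List G, ∃ t : T, ∀ g ∈ L, (act t g).isSome

namespace PartialAction

variable {G T : Type*} [Group G] (φ : PartialAction G T)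

theorem act_inv_of_act {g : G} {t t' : T} (h : φ.act t g = some t') :
    φ.act t' g⁻¹ = some t := by
  rw [φ.pa2 g g⁻¹ t t' h, mul_inv_cancel, φ.pa1]

def Intertwines {G' : Type*} [Group G'] (π : G' →* G) (f : T → G') (x : G') : Prop :=
  ∀ t t' : T, φ.act t (π x) = some t' → f t' = f t * x

variable {G' : Type*} [Group G'] {π : G' →* G} {f : T → G'} {φ}

theorem Intertwines.inv {x : G'} (hx : φ.Intertwines π f x) : φ.Intertwines π f x⁻¹ := by
  intro t t' h
  have h' : φ.act t' (π x) = some t := by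
    simpa using φ.act_inv_of_act h
  rw [hx t' t h', mul_inv_cancel_right]

theorem Intertwines.list_prod {l : List G'} (hl : ∀ x ∈ l, φ.Intertwines π f x) {t t' : T}
    (hdef : ∀ p, p <+: l → (φ.act t (π p.prod)).isSome)
    (h : φ.act t (π l.prod) = some t') : f t' = f t * l.prod := by
  induction l generalizing t with
  | nil =>
    simp only [List.prod_nil, map_one, φ.pa1, Option.some.injEq] at h
    simp [h]
  | cons x l ih =>
    obtain ⟨t₁, ht₁⟩ := Option.isSome_iff_exists.mp (by simpa using hdef [x] (by simp))
    have hshift : ∀ p : List G', φ.act t₁ (π p.prod) = φ.act t (π (x :: p).prod) := by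
      intro p
      rw [φ.pa2 _ _ t t₁ ht₁, List.prod_cons, map_mul]
    have hrest : f t' = f t₁ * l.prod :=
      ih (fun y hy => hl y (List.mem_cons_of_mem x hy))
        (fun p hp => hshift p ▸ hdef _ (List.prefix_cons_inj x |>.mpr hp))
        (hshift l ▸ h)
    rw [hrest, hl x List.mem_cons_self t t₁ ht₁, List.prod_cons, mul_assoc]

end PartialAction

/-- Proposition 1.3: if `π : G̃ → G` is a surjective group homomorphism, `G` acts
partially on `T`, `X` generates `G̃`, and `f : T → G̃` satisfies
`f(t • π x) = f t * x` for every generator `x ∈ X` whenever `t • π x` is defined,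
then `π` is an isomorphism. -/
theorem stmt1 {G' G T : Type*} [Group G'] [Group G] (π : G' →* G)
    (hsurj : Function.Surjective π) (φ : PartialAction G T)
    (X : Set G') (hX : Subgroup.closure X = ⊤)
    (f : T → G')
    (hf : ∀ x ∈ X, ∀ (t t' : T), φ.act t (π x) = some t' → f t' = f t * x) :
    Function.Bijective π := by
  refine ⟨(injective_iff_map_eq_one π).mpr fun g hg => ?_, hsurj⟩
  obtain ⟨l, hlX, rfl⟩ : ∃ l : List G', (∀ x ∈ l, x ∈ X ∪ X⁻¹) ∧ l.prod = g :=
    Submonoid.exists_list_of_mem_closure (by rw [← Subgroup.closure_toSubmonoid, hX]; trivial)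
  have hl : ∀ x ∈ l, φ.Intertwines π f x := fun x hx =>
    (hlX x hx).elim (hf x) fun hinv => inv_inv x ▸ PartialAction.Intertwines.inv (hf _ hinv)
  obtain ⟨t, ht⟩ := φ.pa3 (l.inits.map fun p => π p.prod)
  have hloop : f t = f t * l.prod :=
    PartialAction.Intertwines.list_prod hl
      (fun p hp => ht _ (List.mem_map.mpr ⟨p, (List.mem_inits p l).mpr hp, rfl⟩))
      (by rw [hg, φ.pa1])
  exact mul_eq_left.mp hloop.symm
end

section
/- Every element of the geometry monoid 𝒢(A) admits a seed consisting of injective coloured trees; that is, for each g ∈ 𝒢(A) there exists a pair (t, t') of injective coloured trees such that, as a set of pairs, g equals the set of all pairs (t^σ, t'^σ) with σ a substitution. -/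
/-- Coloured trees: finite rooted binary trees whose leaves are labelled by
positive integers. -/
inductive CTree : Type
  | leaf : ℕ+ → CTree
  | node : CTree → CTree → CTree

/-- Partial maps on coloured trees, as a monoid under reversed composition:
`(f * g) t = (f t).bind g`, i.e. `f * g` means "`f` then `g`". -/
abbrev PMap : Type := CTree → Option CTree

instance : Monoid PMap where
  one := fun t => some t
  mul f g := fun t => (f t).bind g
  mul_assoc f g h := by
    funext t
    show ((f t).bind g).bind h = (f t).bind fun u => (g u).bind h
    cases f t <;> rfl
  one_mul f := rfl
  mul_one f := by
    funext t
    show (f t).bind some = f t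
    cases f t <;> rfl

/-- The associativity operator `A`: maps `t₁·(t₂·t₃)` to `(t₁·t₂)·t₃`. -/
def opA : PMap
  | .node t₁ (.node t₂ t₃) => some (.node (.node t₁ t₂) t₃)
  | _ => none

/-- The inverse partial map of `A`: maps `(t₁·t₂)·t₃` to `t₁·(t₂·t₃)`. -/
def opAi : PMap
  | .node (.node t₁ t₂) t₃ => some (.node t₁ (.node t₂ t₃))
  | _ => none

/-- The commutativity operator `C`: maps `t₁·t₂` to `t₂·t₁` (its own inverse
as a partial map). -/
def opC : PMap
  | .node t₁ t₂ => some (.node t₂ t₁)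
  | _ => none

/-- The semi-commutativity operator `S`: maps `t₁·(t₂·t₃)` to `t₂·(t₁·t₃)`
(its own inverse as a partial map). -/
def opS : PMap
  | .node t₁ (.node t₂ t₃) => some (.node t₂ (.node t₁ t₃))
  | _ => none

/-- Addresses: finite words over `{0,1}`, with `false` = 0 (left) and `true` = 1
(right). -/
abbrev Addr := List Bool

/-- `applyAt α f` is the shifted operator `∂_α f`, applying `f` to the
`α`-subtree of its argument. -/
def applyAt : Addr → PMap → PMap
  | [], f => f
  | false :: α, f => fun t => match t with
      | .node t₁ t₂ => (applyAt α f t₁).map (fun s => .node s t₂)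
      | _ => none
  | true :: α, f => fun t => match t with
      | .node t₁ t₂ => (applyAt α f t₂).map (fun s => .node t₁ s)
      | _ => none

/-- Two partial maps are near-equal if they are both defined on at least one common
element, and they agree wherever both are defined. -/
def NearEq (f g : PMap) : Prop :=
  (∃ t, (f t).isSome ∧ (g t).isSome) ∧
  ∀ t, (f t).isSome → (g t).isSome → f t = g t

/-- The generators of the geometry monoid of associativity: the operators `A_α`
and their inverse partial maps. -/
def genA : Set PMap := {f | ∃ α : Addr, f = applyAt α opA ∨ f = applyAt α opAi}

/-- The geometry monoid `𝒢(A)` of associativity. -/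
def GeoA : Submonoid PMap := Submonoid.closure genA

/-- Applying a substitution `σ` to a coloured tree: replace each leaf `•ₓ` by
the tree `σ x`. -/
def subst (σ : ℕ+ → CTree) : CTree → CTree
  | .leaf x => σ x
  | .node t₁ t₂ => .node (subst σ t₁) (subst σ t₂)

/-- The list of leaf labels of a coloured tree, from left to right. -/
def labels : CTree → List ℕ+
  | .leaf x => [x]
  | .node t₁ t₂ => labels t₁ ++ labels t₂

/-- A coloured tree is injective if its labels are pairwise distinct. -/
def InjTree (t : CTree) : Prop := (labels t).Nodup

/-!
Each generator `A_α^{±1}` has an evident seed on three distinct labels, padded along `α` by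
fresh leaves, and so seeds can be chosen injective and avoiding any finite set of labels.
If `(t₁, t₁')` seeds `f` and `(t₂, t₂')` seeds `g`, both injective and on disjoint labels, then
`t₁'` and `t₂` are linear and label-disjoint, hence unifiable, by a most general unifier `μ`
with `μ ; σ = σ` for every unifier `σ`; therefore `(t₁^μ, t₂'^μ)` seeds `f * g`. Associativity
does not move leaves, so the two trees of a seed carry the same label list, and this keeps the
composite seed injective.
-/

namespace CTree

theorem subst_subst (σ τ : ℕ+ → CTree) (t : CTree) :
    subst σ (subst τ t) = subst (fun x => subst σ (τ x)) t := by
  induction t with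
  | leaf x => rfl
  | node a b iha ihb => simp only [subst, iha, ihb]

theorem subst_leaf (t : CTree) : subst leaf t = t := by
  induction t with
  | leaf x => rfl
  | node a b iha ihb => simp only [subst, iha, ihb]

theorem subst_congr {σ τ : ℕ+ → CTree} {t : CTree} (h : ∀ x ∈ labels t, σ x = τ x) :
    subst σ t = subst τ t := by
  induction t with
  | leaf x => exact h x (List.mem_singleton_self x)
  | node a b iha ihb =>
    simp only [labels, List.mem_append] at h
    simp only [subst, iha fun x hx => h x (.inl hx), ihb fun x hx => h x (.inr hx)]

theorem subst_update_of_notMem {σ : ℕ+ → CTree} {x : ℕ+} {t : CTree} (hx : x ∉ labels t)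
    (s : CTree) : subst (Function.update σ x s) t = subst σ t :=
  subst_congr fun _ hy => Function.update_of_ne (ne_of_mem_of_not_mem hy hx) _ _

theorem labels_subst (σ : ℕ+ → CTree) (t : CTree) :
    labels (subst σ t) = (labels t).flatMap fun x => labels (σ x) := by
  induction t with
  | leaf x => simp [subst, labels]
  | node a b iha ihb => simp [subst, labels, iha, ihb]

theorem nodup_labels_node_append {a b c d : CTree}
    (h : (labels (node a b) ++ labels (node c d)).Nodup) :
    (labels a ++ labels c).Nodup ∧ (labels b ++ labels d).Nodup ∧
      (labels a ++ labels c).Disjoint (labels b ++ labels d) := by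
  simp only [labels, List.nodup_append', List.disjoint_append_left,
    List.disjoint_append_right] at h ⊢
  tauto

def unify : CTree → CTree → CTree
  | leaf _, s => s
  | node a b, leaf _ => node a b
  | node a b, node c d => node (unify a c) (unify b d)

def mgu : CTree → CTree → ℕ+ → CTree
  | leaf x, s => Function.update leaf x s
  | node a b, leaf y => Function.update leaf y (node a b)
  | node a b, node c d => fun z => if z ∈ labels a ++ labels c then mgu a c z else mgu b d z

theorem subst_mgu_left : ∀ {t s : CTree}, (labels t ++ labels s).Nodup →
    subst (mgu t s) t = unify t s
  | leaf x, s, _ => by simp [mgu, subst, unify]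
  | node a b, leaf y, h => by
    have hy : y ∉ labels (node a b) := fun hy =>
      List.disjoint_of_nodup_append h hy (List.mem_singleton_self y)
    rw [mgu, subst_update_of_notMem hy, subst_leaf, unify]
  | node a b, node c d, h => by
    obtain ⟨hac, hbd, hdisj⟩ := nodup_labels_node_append h
    simp only [mgu, subst, unify]
    rw [← subst_mgu_left hac, ← subst_mgu_left hbd]
    congr 1 <;> refine subst_congr fun z hz => ?_
    · rw [if_pos (List.mem_append_left _ hz)]
    · rw [if_neg fun h' => hdisj h' (List.mem_append_left _ hz)]

theorem subst_mgu_right : ∀ {t s : CTree}, (labels t ++ labels s).Nodup →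
    subst (mgu t s) s = unify t s
  | leaf x, s, h => by
    have hx : x ∉ labels s := List.disjoint_of_nodup_append h (List.mem_singleton_self x)
    rw [mgu, subst_update_of_notMem hx, subst_leaf, unify]
  | node a b, leaf y, h => by simp [mgu, subst, unify]
  | node a b, node c d, h => by
    obtain ⟨hac, hbd, hdisj⟩ := nodup_labels_node_append h
    simp only [mgu, subst, unify]
    rw [← subst_mgu_right hac, ← subst_mgu_right hbd]
    congr 1 <;> refine subst_congr fun z hz => ?_
    · rw [if_pos (List.mem_append_right _ hz)]
    · rw [if_neg fun h' => hdisj h' (List.mem_append_right _ hz)]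

theorem subst_mgu_apply {σ : ℕ+ → CTree} : ∀ {t s : CTree}, subst σ t = subst σ s →
    ∀ z, subst σ (mgu t s z) = σ z
  | leaf x, s, h, z => by
    rcases eq_or_ne z x with rfl | hzx
    · simpa [mgu, subst] using h.symm
    · simp [mgu, hzx, subst]
  | node a b, leaf y, h, z => by
    rcases eq_or_ne z y with rfl | hzy
    · simpa [mgu, subst] using h
    · simp [mgu, hzy, subst]
  | node a b, node c d, h, z => by
    simp only [subst, node.injEq] at h
    simp only [mgu]
    split_ifs
    exacts [subst_mgu_apply h.1 z, subst_mgu_apply h.2 z]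

theorem subst_subst_mgu {σ : ℕ+ → CTree} {t s : CTree} (h : subst σ t = subst σ s)
    (r : CTree) : subst σ (subst (mgu t s) r) = subst σ r := by
  rw [subst_subst]
  exact subst_congr fun z _ => subst_mgu_apply h z

theorem mem_labels_unify : ∀ {t s : CTree} {z : ℕ+}, z ∈ labels (unify t s) →
    z ∈ labels t ++ labels s
  | leaf _, _, _, h => List.mem_append_right _ h
  | node _ _, leaf _, _, h => List.mem_append_left _ h
  | node a b, node c d, z, h => by
    have hac := @mem_labels_unify a c z
    have hbd := @mem_labels_unify b d z
    simp only [unify, labels, List.mem_append] at *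
    tauto

theorem nodup_labels_unify : ∀ {t s : CTree}, (labels t ++ labels s).Nodup →
    (labels (unify t s)).Nodup
  | leaf _, _, h => h.of_append_right
  | node _ _, leaf _, h => h.of_append_left
  | node a b, node c d, h => by
    obtain ⟨hac, hbd, hdisj⟩ := nodup_labels_node_append h
    exact (nodup_labels_unify hac).append (nodup_labels_unify hbd)
      fun _ hac' hbd' => hdisj (mem_labels_unify hac') (mem_labels_unify hbd')

end CTree

open CTree

def IsSeed (g : PMap) (t t' : CTree) : Prop :=
  ∀ u v, g u = some v ↔ ∃ σ : ℕ+ → CTree, u = subst σ t ∧ v = subst σ t'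

def HasFreshSeeds (g : PMap) : Prop :=
  ∀ S : List ℕ+, ∃ t t', IsSeed g t t' ∧ labels t' = labels t ∧ (labels t).Nodup ∧
    (labels t).Disjoint S

theorem exists_pnat_notMem (S : List ℕ+) : ∃ x : ℕ+, x ∉ S := by
  simpa using Infinite.exists_notMem_finset S.toFinset

theorem isSeed_one (x : ℕ+) : IsSeed 1 (leaf x) (leaf x) := by
  intro u v
  change some u = some v ↔ _
  refine ⟨fun h => ⟨fun _ => u, rfl, (Option.some.inj h).symm⟩, ?_⟩
  rintro ⟨σ, rfl, rfl⟩
  rfl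

theorem hasFreshSeeds_one : HasFreshSeeds 1 := fun S => by
  obtain ⟨x, hx⟩ := exists_pnat_notMem S
  exact ⟨leaf x, leaf x, isSeed_one x, rfl, List.nodup_singleton x, by simpa [labels] using hx⟩

theorem exists_subst_eq_three {x y z : ℕ+} (hxy : x ≠ y) (hxz : x ≠ z) (hyz : y ≠ z)
    (a b c : CTree) : ∃ σ : ℕ+ → CTree, σ x = a ∧ σ y = b ∧ σ z = c :=
  ⟨Function.update (Function.update (Function.update leaf z c) y b) x a,
    by simp [hxy.symm, hxz.symm, hyz.symm]⟩

theorem opA_eq_some_iff {u v : CTree} :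
    opA u = some v ↔ ∃ a b c, u = node a (node b c) ∧ v = node (node a b) c := by
  rcases u with _ | ⟨a, _ | ⟨b, c⟩⟩ <;> simp [opA, eq_comm]

theorem opAi_eq_some_iff {u v : CTree} :
    opAi u = some v ↔ ∃ a b c, u = node (node a b) c ∧ v = node a (node b c) := by
  rcases u with _ | ⟨_ | ⟨a, b⟩, c⟩ <;> simp [opAi, eq_comm]

theorem isSeed_opA {x y z : ℕ+} (hxy : x ≠ y) (hxz : x ≠ z) (hyz : y ≠ z) :
    IsSeed opA (node (leaf x) (node (leaf y) (leaf z)))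
      (node (node (leaf x) (leaf y)) (leaf z)) := by
  intro u v
  rw [opA_eq_some_iff]
  constructor
  · rintro ⟨a, b, c, rfl, rfl⟩
    obtain ⟨σ, hx, hy, hz⟩ := exists_subst_eq_three hxy hxz hyz a b c
    exact ⟨σ, by simp [subst, hx, hy, hz], by simp [subst, hx, hy, hz]⟩
  · rintro ⟨σ, rfl, rfl⟩
    exact ⟨σ x, σ y, σ z, rfl, rfl⟩

theorem isSeed_opAi {x y z : ℕ+} (hxy : x ≠ y) (hxz : x ≠ z) (hyz : y ≠ z) :
    IsSeed opAi (node (node (leaf x) (leaf y)) (leaf z))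
      (node (leaf x) (node (leaf y) (leaf z))) := by
  intro u v
  rw [opAi_eq_some_iff]
  constructor
  · rintro ⟨a, b, c, rfl, rfl⟩
    obtain ⟨σ, hx, hy, hz⟩ := exists_subst_eq_three hxy hxz hyz a b c
    exact ⟨σ, by simp [subst, hx, hy, hz], by simp [subst, hx, hy, hz]⟩
  · rintro ⟨σ, rfl, rfl⟩
    exact ⟨σ x, σ y, σ z, rfl, rfl⟩

theorem exists_three_fresh (S : List ℕ+) :
    ∃ x y z : ℕ+, x ≠ y ∧ x ≠ z ∧ y ≠ z ∧ [x, y, z].Disjoint S := by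
  obtain ⟨x, hx⟩ := exists_pnat_notMem S
  obtain ⟨y, hy⟩ := exists_pnat_notMem (x :: S)
  obtain ⟨z, hz⟩ := exists_pnat_notMem (y :: x :: S)
  simp only [List.mem_cons, not_or] at hy hz
  refine ⟨x, y, z, Ne.symm hy.1, Ne.symm hz.2.1, Ne.symm hz.1, ?_⟩
  simp [List.disjoint_cons_left, hx, hy.2, hz.2.2]

theorem hasFreshSeeds_opA : HasFreshSeeds opA := fun S => by
  obtain ⟨x, y, z, hxy, hxz, hyz, hS⟩ := exists_three_fresh S
  exact ⟨_, _, isSeed_opA hxy hxz hyz, rfl, by simp [labels, hxy, hxz, hyz], hS⟩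

theorem hasFreshSeeds_opAi : HasFreshSeeds opAi := fun S => by
  obtain ⟨x, y, z, hxy, hxz, hyz, hS⟩ := exists_three_fresh S
  exact ⟨_, _, isSeed_opAi hxy hxz hyz, rfl, by simp [labels, hxy, hxz, hyz], hS⟩

theorem IsSeed.applyAt_false {f : PMap} {α : Addr} {t t' : CTree} {x : ℕ+}
    (h : IsSeed (applyAt α f) t t') (hx : x ∉ labels t) (hx' : x ∉ labels t') :
    IsSeed (applyAt (false :: α) f) (node t (leaf x)) (node t' (leaf x)) := by
  rintro (_ | ⟨u₁, u₂⟩) v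
  · simp [applyAt, subst]
  simp only [applyAt, Option.map_eq_some_iff, subst, node.injEq]
  constructor
  · rintro ⟨v₁, hv₁, rfl⟩
    obtain ⟨σ, rfl, rfl⟩ := (h u₁ v₁).1 hv₁
    refine ⟨Function.update σ x u₂, ?_⟩
    simp [subst_update_of_notMem hx, subst_update_of_notMem hx']
  · rintro ⟨σ, ⟨rfl, rfl⟩, rfl⟩
    exact ⟨_, (h _ _).2 ⟨σ, rfl, rfl⟩, rfl⟩

theorem IsSeed.applyAt_true {f : PMap} {α : Addr} {t t' : CTree} {x : ℕ+}
    (h : IsSeed (applyAt α f) t t') (hx : x ∉ labels t) (hx' : x ∉ labels t') :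
    IsSeed (applyAt (true :: α) f) (node (leaf x) t) (node (leaf x) t') := by
  rintro (_ | ⟨u₁, u₂⟩) v
  · simp [applyAt, subst]
  simp only [applyAt, Option.map_eq_some_iff, subst, node.injEq]
  constructor
  · rintro ⟨v₂, hv₂, rfl⟩
    obtain ⟨σ, rfl, rfl⟩ := (h u₂ v₂).1 hv₂
    refine ⟨Function.update σ x u₁, ?_⟩
    simp [subst_update_of_notMem hx, subst_update_of_notMem hx']
  · rintro ⟨σ, ⟨rfl, rfl⟩, rfl⟩
    exact ⟨_, (h _ _).2 ⟨σ, rfl, rfl⟩, rfl⟩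

theorem HasFreshSeeds.applyAt {f : PMap} (hf : HasFreshSeeds f) :
    ∀ α : Addr, HasFreshSeeds (applyAt α f)
  | [] => hf
  | b :: α => fun S => by
    obtain ⟨t, t', hseed, hlab, hnd, hS⟩ := hf.applyAt α S
    obtain ⟨x, hx⟩ := exists_pnat_notMem (S ++ labels t)
    simp only [List.mem_append, not_or] at hx
    have hx' : x ∉ labels t' := hlab ▸ hx.2
    cases b
    · refine ⟨_, _, hseed.applyAt_false hx.2 hx', by simp [labels, hlab], ?_, ?_⟩
      · simpa [labels, List.nodup_append] using ⟨hnd, fun _ hy h => hx.2 (h ▸ hy)⟩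
      · simpa [labels] using ⟨hS, hx.1⟩
    · refine ⟨_, _, hseed.applyAt_true hx.2 hx', by simp [labels, hlab], ?_, ?_⟩
      · simpa [labels, List.nodup_append] using ⟨hx.2, hnd⟩
      · simpa [labels] using ⟨hx.1, hS⟩

theorem IsSeed.mul {f g : PMap} {t₁ t₁' t₂ t₂' : CTree} (h₁ : IsSeed f t₁ t₁')
    (h₂ : IsSeed g t₂ t₂') (hdisj : (labels t₁ ++ labels t₁').Disjoint (labels t₂ ++ labels t₂'))
    (hlin : (labels t₁' ++ labels t₂).Nodup) :
    IsSeed (f * g) (subst (mgu t₁' t₂) t₁) (subst (mgu t₁' t₂) t₂') := by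
  intro u w
  change (f u).bind g = some w ↔ _
  rw [Option.bind_eq_some_iff]
  constructor
  · rintro ⟨v, hfu, hgv⟩
    obtain ⟨σ₁, rfl, rfl⟩ := (h₁ u v).1 hfu
    obtain ⟨σ₂, hv, rfl⟩ := (h₂ _ w).1 hgv
    let σ z := if z ∈ labels t₁ ++ labels t₁' then σ₁ z else σ₂ z
    have hσ₁ {r : CTree} (hr : labels r ⊆ labels t₁ ++ labels t₁') : subst σ r = subst σ₁ r :=
      subst_congr fun z hz => if_pos (hr hz)
    have hσ₂ {r : CTree} (hr : labels r ⊆ labels t₂ ++ labels t₂') : subst σ r = subst σ₂ r :=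
      subst_congr fun z hz => if_neg fun h => hdisj h (hr hz)
    have hσ : subst σ t₁' = subst σ t₂ := by
      rw [hσ₁ (List.subset_append_right _ _), hσ₂ (List.subset_append_left _ _), hv]
    exact ⟨σ, by rw [subst_subst_mgu hσ, hσ₁ (List.subset_append_left _ _)],
      by rw [subst_subst_mgu hσ, hσ₂ (List.subset_append_right _ _)]⟩
  · rintro ⟨τ, rfl, rfl⟩
    have hμ : subst (mgu t₁' t₂) t₁' = subst (mgu t₁' t₂) t₂ :=
      (subst_mgu_left hlin).trans (subst_mgu_right hlin).symm
    refine ⟨subst τ (subst (mgu t₁' t₂) t₁'), (h₁ _ _).2 ⟨_, subst_subst .., subst_subst ..⟩,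
      (h₂ _ _).2 ⟨_, ?_, subst_subst ..⟩⟩
    rw [hμ, subst_subst]

theorem HasFreshSeeds.mul {f g : PMap} (hf : HasFreshSeeds f) (hg : HasFreshSeeds g) :
    HasFreshSeeds (f * g) := fun S => by
  obtain ⟨t₁, t₁', h₁, hlab₁, hnd₁, hS₁⟩ := hf S
  obtain ⟨t₂, t₂', h₂, hlab₂, hnd₂, hS₂⟩ := hg (S ++ labels t₁)
  have h₂₁ : (labels t₂).Disjoint (labels t₁) := (List.disjoint_append_right.1 hS₂).2
  have hlin : (labels t₁' ++ labels t₂).Nodup := hlab₁ ▸ hnd₁.append hnd₂ h₂₁.symm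
  have hlabels {r r' : CTree} (hr : labels r' = labels r) :
      labels (subst (mgu t₁' t₂) r') = labels (subst (mgu t₁' t₂) r) := by
    rw [labels_subst, labels_subst, hr]
  have hleft : labels (subst (mgu t₁' t₂) t₁) = labels (unify t₁' t₂) := by
    rw [← subst_mgu_left hlin, hlabels hlab₁]
  have hright : labels (subst (mgu t₁' t₂) t₂') = labels (unify t₁' t₂) := by
    rw [← subst_mgu_right hlin, hlabels hlab₂]
  refine ⟨_, _, h₁.mul h₂ ?_ hlin, hright.trans hleft.symm, hleft ▸ nodup_labels_unify hlin, ?_⟩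
  · rw [hlab₁, hlab₂]
    simpa using h₂₁.symm
  · rw [hleft]
    intro z hz hzS
    rcases List.mem_append.1 (mem_labels_unify hz) with h | h
    · exact hS₁ (hlab₁ ▸ h) hzS
    · exact hS₂ h (List.mem_append_left _ hzS)

theorem hasFreshSeeds_of_mem_geoA {g : PMap} (hg : g ∈ GeoA) : HasFreshSeeds g := by
  induction hg using Submonoid.closure_induction with
  | mem f hf =>
    obtain ⟨α, rfl | rfl⟩ := hf
    exacts [hasFreshSeeds_opA.applyAt α, hasFreshSeeds_opAi.applyAt α]
  | one => exact hasFreshSeeds_one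
  | mul f g _ _ hf hg => exact hf.mul hg

/-- Lemma 2.3: each element of the geometry monoid `𝒢(A)` admits a seed consisting
of injective trees: there is a pair `(t, t')` of injective coloured trees such that,
as a set of pairs, `g` is exactly the set of all `(t^σ, t'^σ)` with `σ` a
substitution. -/
theorem stmt4 (g : PMap) (hg : g ∈ GeoA) :
    ∃ t t' : CTree, InjTree t ∧ InjTree t' ∧
      ∀ u v : CTree, (g u = some v ↔ ∃ σ : ℕ+ → CTree, u = subst σ t ∧ v = subst σ t') := by
  obtain ⟨t, t', hseed, hlab, hnd, -⟩ := hasFreshSeeds_of_mem_geoA hg []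
  exact ⟨t, t', hnd, by rwa [InjTree, hlab], hseed⟩
end

section
/- The relations R_A (the geometric relations for A together with the pentagon relations) make a presentation of the geometry group G(A) in terms of the generators A_α: the canonical homomorphism from the group presented by generators {A_α : α an address} and relations R_A to G(A), sending each generator to the class of the operator A_α, is an isomorphism. -/
theorem memA (α : Addr) : applyAt α opA ∈ GeoA :=
  Submonoid.subset_closure ⟨α, Or.inl rfl⟩

/-- The relations `R_A`, as relators in the free group on the generators `A_α`
(a generator being encoded by its address `α`): for all addresses `α, β, γ`,
`A_{γ0α}·A_{γ1β} = A_{γ1β}·A_{γ0α}`, `A_{γ11α}·A_γ = A_γ·A_{γ1α}`,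
`A_{γ10α}·A_γ = A_γ·A_{γ01α}`, `A_{γ0α}·A_γ = A_γ·A_{γ00α}`, and the pentagon
relations `A_γ·A_γ = A_{γ1}·A_γ·A_{γ0}`. -/
def relsA : Set (FreeGroup Addr) :=
  {x | ∃ γ : Addr,
    (∃ α β : Addr, x = FreeGroup.of (γ ++ false :: α) * FreeGroup.of (γ ++ true :: β) *
        (FreeGroup.of (γ ++ true :: β) * FreeGroup.of (γ ++ false :: α))⁻¹) ∨
    (∃ α : Addr, x = FreeGroup.of (γ ++ true :: true :: α) * FreeGroup.of γ *
        (FreeGroup.of γ * FreeGroup.of (γ ++ true :: α))⁻¹) ∨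
    (∃ α : Addr, x = FreeGroup.of (γ ++ true :: false :: α) * FreeGroup.of γ *
        (FreeGroup.of γ * FreeGroup.of (γ ++ false :: true :: α))⁻¹) ∨
    (∃ α : Addr, x = FreeGroup.of (γ ++ false :: α) * FreeGroup.of γ *
        (FreeGroup.of γ * FreeGroup.of (γ ++ false :: false :: α))⁻¹) ∨
    (x = FreeGroup.of γ * FreeGroup.of γ *
        (FreeGroup.of (γ ++ [true]) * FreeGroup.of γ * FreeGroup.of (γ ++ [false]))⁻¹)}

/-!
The relations `R_A` hold between the operators `A_α` as equalities of partial maps, and every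
element of `𝒢(A)` is defined on all trees whose leaves are deep enough, so equal elements are
near-equal and `A_α ↦ [A_α]` defines a homomorphism from the presented group onto `G(A)`.

For injectivity, the relations show that the presented group is generated by `y n = A_{1ⁿ}`,
subject to `y (j+1) y i = y i y j` for `i < j`, so every element is `u⁻¹ v` for positive words
`u, v` in the `y n`. On the right comb `t₀·(t₁·(⋯))` the operator `y n` merges `tₙ` and `tₙ₊₁`.
If `u` and `v` agree on a comb of distinct leaves, they are equal: if `v` starts by merging
`a` and `b`, then `u` must also build a subtree with the leaves of `a·b`. Before doing so `u`
cannot merge `b` (say) with its other neighbour `e`: from then on every subtree meeting the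
leaves of `b` lies inside `b` or contains `e`. So `u` merges `a` and `b` after merges elsewhere,
which commute with it by the relations, and we induct.
-/

open CTree

namespace AssocGeometry

/-! ### Shifted operators and the relations `R_A` -/

theorem pmap_mul_apply (f g : PMap) (t : CTree) : (f * g) t = (f t).bind g := rfl

theorem applyAt_false_node (α : Addr) (f : PMap) (a b : CTree) :
    applyAt (false :: α) f (node a b) = (applyAt α f a).map (node · b) := rfl

theorem applyAt_true_node (α : Addr) (f : PMap) (a b : CTree) :
    applyAt (true :: α) f (node a b) = (applyAt α f b).map (node a ·) := rfl

theorem applyAt_cons_leaf (b : Bool) (α : Addr) (f : PMap) (n : ℕ+) :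
    applyAt (b :: α) f (leaf n) = none := by
  cases b <;> rfl

theorem applyAt_append (γ δ : Addr) (f : PMap) :
    applyAt (γ ++ δ) f = applyAt γ (applyAt δ f) := by
  induction γ with
  | nil => rfl
  | cons b γ ih =>
    funext t
    cases b <;> rcases t with n | ⟨a, c⟩ <;>
      simp [applyAt_cons_leaf, applyAt_false_node, applyAt_true_node, ih]

theorem applyAt_mul (γ : Addr) (f g : PMap) :
    applyAt γ (f * g) = applyAt γ f * applyAt γ g := by
  induction γ with
  | nil => rfl
  | cons b γ ih =>
    funext t
    cases b <;> rcases t with n | ⟨a, c⟩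
    all_goals simp only [pmap_mul_apply, applyAt_cons_leaf, applyAt_false_node, applyAt_true_node,
      Option.bind_none, ih]
    all_goals first
      | cases applyAt γ f a <;> rfl
      | cases applyAt γ f c <;> rfl

theorem applyAt_false_comm_applyAt_true (α β : Addr) (f g : PMap) :
    applyAt (false :: α) f * applyAt (true :: β) g
      = applyAt (true :: β) g * applyAt (false :: α) f := by
  funext t
  rcases t with n | ⟨a, c⟩
  · rfl
  · cases ha : applyAt α f a <;> cases hc : applyAt β g c <;>
      simp [pmap_mul_apply, applyAt_false_node, applyAt_true_node, ha, hc]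

theorem applyAt_true_true_mul_opA (α : Addr) :
    applyAt (true :: true :: α) opA * opA = opA * applyAt (true :: α) opA := by
  funext t
  rcases t with n | ⟨a, _ | ⟨b, c⟩⟩
  · rfl
  · rfl
  · cases h : applyAt α opA c <;> simp [pmap_mul_apply, applyAt_true_node, opA, h]

theorem applyAt_true_false_mul_opA (α : Addr) :
    applyAt (true :: false :: α) opA * opA = opA * applyAt (false :: true :: α) opA := by
  funext t
  rcases t with n | ⟨a, _ | ⟨b, c⟩⟩
  · rfl
  · rfl
  · cases h : applyAt α opA b <;>
      simp [pmap_mul_apply, applyAt_false_node, applyAt_true_node, opA, h]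

theorem applyAt_false_mul_opA (α : Addr) :
    applyAt (false :: α) opA * opA = opA * applyAt (false :: false :: α) opA := by
  funext t
  rcases t with n | ⟨a, _ | ⟨b, c⟩⟩
  · rfl
  · cases h : applyAt α opA a <;> simp [pmap_mul_apply, applyAt_false_node, opA, h]
  · cases h : applyAt α opA a <;> simp [pmap_mul_apply, applyAt_false_node, opA, h]

theorem opA_pentagon : opA * opA = applyAt [true] opA * opA * applyAt [false] opA := by
  funext t
  rcases t with n | ⟨a, _ | ⟨b, _ | ⟨c, d⟩⟩⟩ <;> rfl

theorem applyAt_opAi_of_applyAt_opA {α : Addr} {t t' : CTree}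
    (h : applyAt α opA t = some t') : applyAt α opAi t' = some t := by
  induction α generalizing t t' with
  | nil =>
    rcases t with n | ⟨a, _ | ⟨b, c⟩⟩ <;> cases h
    rfl
  | cons b α ih =>
    rcases t with n | ⟨a, c⟩
    · simp [applyAt_cons_leaf] at h
    · cases b
      · obtain ⟨a', ha, rfl⟩ := Option.map_eq_some_iff.mp h
        simp [applyAt_false_node, ih ha]
      · obtain ⟨c', hc, rfl⟩ := Option.map_eq_some_iff.mp h
        simp [applyAt_true_node, ih hc]

/-! ### Every element of `𝒢(A)` is defined somewhere -/

def minDepth : CTree → ℕ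
  | leaf _ => 0
  | node a b => min (minDepth a) (minDepth b) + 1

def perfect : ℕ → CTree
  | 0 => leaf 1
  | n + 1 => node (perfect n) (perfect n)

theorem minDepth_perfect (n : ℕ) : minDepth (perfect n) = n := by
  induction n with
  | zero => rfl
  | succ n ih => simp [perfect, minDepth, ih]

def DefinedBelow (N : ℕ) (f : PMap) : Prop :=
  ∀ t, N ≤ minDepth t → ∃ t', f t = some t' ∧ minDepth t ≤ minDepth t' + N

theorem definedBelow_one : DefinedBelow 0 1 :=
  fun t _ => ⟨t, rfl, le_rfl⟩

theorem DefinedBelow.mul {N M : ℕ} {f g : PMap} (hf : DefinedBelow N f)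
    (hg : DefinedBelow M g) : DefinedBelow (N + M) (f * g) := by
  intro t ht
  obtain ⟨t₁, h₁, hd₁⟩ := hf t (by omega)
  obtain ⟨t₂, h₂, hd₂⟩ := hg t₁ (by omega)
  exact ⟨t₂, by rw [pmap_mul_apply, h₁, Option.bind_some, h₂], by omega⟩

theorem DefinedBelow.applyAt {N : ℕ} {f : PMap} (hf : DefinedBelow N f) (α : Addr) :
    DefinedBelow (α.length + N) (applyAt α f) := by
  induction α with
  | nil => rw [List.length_nil, zero_add]; exact hf
  | cons b α ih =>
    rintro (n | ⟨a, c⟩) ht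
    · simp [minDepth] at ht
    · simp only [List.length_cons, minDepth] at ht
      cases b
      · obtain ⟨a', ha, hd⟩ := ih a (by omega)
        refine ⟨node a' c, by simp [applyAt_false_node, ha], ?_⟩
        simp only [minDepth, List.length_cons]
        omega
      · obtain ⟨c', hc, hd⟩ := ih c (by omega)
        refine ⟨node a c', by simp [applyAt_true_node, hc], ?_⟩
        simp only [minDepth, List.length_cons]
        omega

theorem definedBelow_opA : DefinedBelow 2 opA := by
  rintro (n | ⟨a, _ | ⟨b, c⟩⟩) ht
  · simp [minDepth] at ht
  · simp [minDepth] at ht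
  · exact ⟨_, rfl, by simp only [minDepth]; omega⟩

theorem definedBelow_opAi : DefinedBelow 2 opAi := by
  rintro (n | ⟨_ | ⟨a, b⟩, c⟩) ht
  · simp [minDepth] at ht
  · simp [minDepth] at ht
  · exact ⟨_, rfl, by simp only [minDepth]; omega⟩

theorem exists_definedBelow {f : PMap} (hf : f ∈ GeoA) : ∃ N, DefinedBelow N f := by
  induction hf using Submonoid.closure_induction with
  | mem g hg =>
    obtain ⟨α, rfl | rfl⟩ := hg
    · exact ⟨_, definedBelow_opA.applyAt α⟩
    · exact ⟨_, definedBelow_opAi.applyAt α⟩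
  | one => exact ⟨0, definedBelow_one⟩
  | mul f g _ _ hf hg =>
    obtain ⟨N, hN⟩ := hf
    obtain ⟨M, hM⟩ := hg
    exact ⟨N + M, hN.mul hM⟩

theorem exists_isSome {f : PMap} (hf : f ∈ GeoA) : ∃ t, (f t).isSome := by
  obtain ⟨N, hN⟩ := exists_definedBelow hf
  obtain ⟨t', h, -⟩ := hN (perfect N) (minDepth_perfect N).ge
  exact ⟨perfect N, by simp [h]⟩

theorem nearEq_self {f : PMap} (hf : f ∈ GeoA) : NearEq f f :=
  ⟨(exists_isSome hf).imp fun _ h => ⟨h, h⟩, fun _ _ _ => rfl⟩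

theorem nearEq_applyAt_opA_mul_opAi (α : Addr) :
    NearEq (applyAt α opA * applyAt α opAi) 1 := by
  refine ⟨?_, fun t h _ => ?_⟩
  · obtain ⟨t, ht⟩ := exists_isSome (memA α)
    obtain ⟨t', h⟩ := Option.isSome_iff_exists.mp ht
    exact ⟨t, by simp [pmap_mul_apply, h, applyAt_opAi_of_applyAt_opA h], rfl⟩
  · obtain ⟨t', h'⟩ := Option.isSome_iff_exists.mp (Option.isSome_of_isSome_bind h)
    rw [pmap_mul_apply, h', Option.bind_some, applyAt_opAi_of_applyAt_opA h']
    rfl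

def assocAt (α : Addr) : GeoA := ⟨applyAt α opA, memA α⟩

/-! ### Forests, merges and combs -/

def mergeAt : ℕ → List CTree → List CTree
  | 0, x :: y :: r => node x y :: r
  | c + 1, x :: r => x :: mergeAt c r
  | _, l => l

def mergeWord : List ℕ → List CTree → List CTree
  | [], l => l
  | c :: w, l => mergeWord w (mergeAt c l)

def Admissible : List ℕ → ℕ → Prop
  | [], _ => True
  | c :: w, n => c + 2 ≤ n ∧ Admissible w (n - 1)

theorem admissible_of_forall_le {w : List ℕ} {n : ℕ} (h : ∀ c ∈ w, c + w.length + 1 ≤ n) :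
    Admissible w n := by
  induction w generalizing n with
  | nil => trivial
  | cons c w ih =>
    simp only [List.mem_cons, List.length_cons, forall_eq_or_imp] at h
    exact ⟨by omega, ih fun d hd => by have := h.2 d hd; omega⟩

theorem mergeAt_length_append (u : List CTree) (x y : CTree) (r : List CTree) :
    mergeAt u.length (u ++ x :: y :: r) = u ++ node x y :: r := by
  induction u with
  | nil => rfl
  | cons a u ih => exact congrArg (a :: ·) ih

theorem exists_eq_append_of_add_two_le {c : ℕ} {l : List CTree} (h : c + 2 ≤ l.length) :
    ∃ u x y r, l = u ++ x :: y :: r ∧ u.length = c := by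
  induction c generalizing l with
  | zero =>
    match l, h with
    | x :: y :: r, _ => exact ⟨[], x, y, r, rfl, rfl⟩
  | succ c ih =>
    match l, h with
    | a :: l, h =>
      obtain ⟨u, x, y, r, rfl, rfl⟩ := ih (l := l) (by simp only [List.length_cons] at h; omega)
      exact ⟨a :: u, x, y, r, rfl, rfl⟩

theorem mergeAt_of_length_lt {c : ℕ} {l : List CTree} (h : l.length < c + 2) :
    mergeAt c l = l := by
  induction c generalizing l with
  | zero => match l, h with
    | [], _ | [_], _ => rfl
  | succ c ih => match l, h with
    | [], _ => rfl
    | a :: l, h => exact congrArg (a :: ·) (ih (by simp only [List.length_cons] at h; omega))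

theorem mergeAt_eq_or (c : ℕ) (l : List CTree) : mergeAt c l = l ∨
    ∃ u x y r, l = u ++ x :: y :: r ∧ mergeAt c l = u ++ node x y :: r := by
  rcases lt_or_ge l.length (c + 2) with h | h
  · exact Or.inl (mergeAt_of_length_lt h)
  · obtain ⟨u, x, y, r, rfl, rfl⟩ := exists_eq_append_of_add_two_le h
    exact Or.inr ⟨u, x, y, r, rfl, mergeAt_length_append u x y r⟩

theorem length_mergeAt {c : ℕ} {l : List CTree} (h : c + 2 ≤ l.length) :
    (mergeAt c l).length + 1 = l.length := by
  obtain ⟨u, x, y, r, rfl, rfl⟩ := exists_eq_append_of_add_two_le h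
  simp only [mergeAt_length_append, List.length_append, List.length_cons]
  omega

theorem length_mergeWord {w : List ℕ} {l : List CTree} (h : Admissible w l.length) :
    (mergeWord w l).length + w.length = l.length := by
  induction w generalizing l with
  | nil => rfl
  | cons c w ih =>
    have := length_mergeAt h.1
    have := ih (l := mergeAt c l) (by convert h.2 using 1; omega)
    simp only [mergeWord, List.length_cons]
    omega

theorem mergeAt_append_of_add_two_le {c : ℕ} {u : List CTree} (r : List CTree)
    (h : c + 2 ≤ u.length) : mergeAt c (u ++ r) = mergeAt c u ++ r := by
  obtain ⟨u, x, y, r', rfl, rfl⟩ := exists_eq_append_of_add_two_le h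
  simp only [List.append_assoc, List.cons_append, mergeAt_length_append]

theorem mergeAt_append_of_le {c : ℕ} (u r : List CTree) (h : u.length ≤ c) :
    mergeAt c (u ++ r) = u ++ mergeAt (c - u.length) r := by
  induction u generalizing c with
  | nil => rfl
  | cons a u ih =>
    obtain ⟨c, rfl⟩ : ∃ c', c = c' + 1 := ⟨c - 1, by simp only [List.length_cons] at h; omega⟩
    simp only [List.cons_append, mergeAt, List.length_cons, Nat.add_sub_add_right]
    exact congrArg (a :: ·) (ih (by simp only [List.length_cons] at h; omega))

theorem mergeAt_mergeAt_succ {i j : ℕ} (h : i < j) (l : List CTree) :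
    mergeAt i (mergeAt (j + 1) l) = mergeAt j (mergeAt i l) := by
  induction i generalizing j l with
  | zero =>
    obtain ⟨j, rfl⟩ : ∃ j', j = j' + 1 := ⟨j - 1, by omega⟩
    match l with
    | [] | [_, _] | _ :: _ :: _ :: _ => rfl
    | [_] => cases j <;> rfl
  | succ i ih =>
    obtain ⟨j, rfl⟩ : ∃ j', j = j' + 1 := ⟨j - 1, by omega⟩
    match l with
    | [] => rfl
    | x :: r => exact congrArg (x :: ·) (ih (by omega) r)

/-- The trailing leaf makes `comb` injective. -/
def comb : List CTree → CTree
  | [] => leaf 1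
  | t :: l => node t (comb l)

theorem comb_injective : Function.Injective comb := by
  intro l l' h
  induction l generalizing l' with
  | nil => cases l' <;> first | rfl | cases h
  | cons t l ih =>
    cases l' with
    | nil => cases h
    | cons t' l' =>
      obtain ⟨rfl, hl⟩ := node.inj h
      exact congrArg (t :: ·) (ih hl)

def ones (n : ℕ) : Addr := List.replicate n true

theorem applyAt_ones_opA_comb {c : ℕ} {l : List CTree} (h : c + 2 ≤ l.length) :
    applyAt (ones c) opA (comb l) = some (comb (mergeAt c l)) := by
  induction c generalizing l with
  | zero => match l, h with
    | x :: y :: r, _ => rfl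
  | succ c ih => match l, h with
    | x :: r, h =>
      change (applyAt (ones c) opA (comb r)).map (node x ·) = _
      rw [ih (by simp only [List.length_cons] at h; omega)]
      rfl

def assocWord (w : List ℕ) : GeoA := (w.map fun c => assocAt (ones c)).prod

theorem assocWord_apply_comb {w : List ℕ} {l : List CTree} (h : Admissible w l.length) :
    (assocWord w : PMap) (comb l) = some (comb (mergeWord w l)) := by
  induction w generalizing l with
  | nil => rfl
  | cons c w ih =>
    have hlen := length_mergeAt h.1
    change (applyAt (ones c) opA * (assocWord w : PMap)) (comb l) = _
    rw [pmap_mul_apply, applyAt_ones_opA_comb h.1, Option.bind_some,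
      ih (by rw [show (mergeAt c l).length = l.length - 1 by omega]; exact h.2)]
    rfl

/-! ### Labels of subtrees -/

def labs : CTree → Set ℕ+
  | leaf n => {n}
  | node a b => labs a ∪ labs b

theorem labs_nonempty (t : CTree) : (labs t).Nonempty := by
  induction t with
  | leaf n => exact ⟨n, rfl⟩
  | node a b iha _ => exact iha.mono Set.subset_union_left

inductive IsSubtree : CTree → CTree → Prop
  | refl (t : CTree) : IsSubtree t t
  | left {s a b : CTree} : IsSubtree s a → IsSubtree s (node a b)
  | right {s a b : CTree} : IsSubtree s b → IsSubtree s (node a b)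

theorem IsSubtree.labs_subset {s t : CTree} (h : IsSubtree s t) : labs s ⊆ labs t := by
  induction h with
  | refl => exact le_rfl
  | left _ ih => exact ih.trans Set.subset_union_left
  | right _ ih => exact ih.trans Set.subset_union_right

def Separated (l : List CTree) : Prop :=
  l.Pairwise fun s t => Disjoint (labs s) (labs t)

theorem Separated.mergeAt {l : List CTree} (h : Separated l) (c : ℕ) :
    Separated (mergeAt c l) := by
  rcases mergeAt_eq_or c l with hc | ⟨u, x, y, r, rfl, hc⟩ <;> rw [hc]
  · exact h
  · simp only [Separated, List.pairwise_append, List.pairwise_cons, List.mem_cons,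
      forall_eq_or_imp, labs, Set.disjoint_union_left, Set.disjoint_union_right] at h ⊢
    aesop

def HasSubtreeLabels (F : List CTree) (S : Set ℕ+) : Prop :=
  ∃ e ∈ F, ∃ s, IsSubtree s e ∧ labs s = S

theorem HasSubtreeLabels.mergeAt {l : List CTree} {S : Set ℕ+} (h : HasSubtreeLabels l S)
    (c : ℕ) : HasSubtreeLabels (mergeAt c l) S := by
  obtain ⟨e, he, s, hs, rfl⟩ := h
  rcases mergeAt_eq_or c l with hc | ⟨u, x, y, r, rfl, hc⟩ <;> rw [hc]
  · exact ⟨e, he, s, hs, rfl⟩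
  · simp only [List.mem_append, List.mem_cons] at he
    rcases he with he | rfl | rfl | he
    · exact ⟨e, by simp [he], s, hs, rfl⟩
    · exact ⟨node e y, by simp, s, hs.left, rfl⟩
    · exact ⟨node x e, by simp, s, hs.right, rfl⟩
    · exact ⟨e, by simp [he], s, hs, rfl⟩

theorem HasSubtreeLabels.mergeWord {l : List CTree} {S : Set ℕ+} (h : HasSubtreeLabels l S)
    (w : List ℕ) : HasSubtreeLabels (mergeWord w l) S := by
  induction w generalizing l with
  | nil => exact h
  | cons c w ih => exact ih (h.mergeAt c)

theorem hasSubtreeLabels_mergeAt_length_append (u : List CTree) (x y : CTree)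
    (r : List CTree) :
    HasSubtreeLabels (mergeAt u.length (u ++ x :: y :: r)) (labs x ∪ labs y) :=
  ⟨node x y, by simp [mergeAt_length_append], _, .refl _, rfl⟩

theorem Separated.eq_of_mem_labs {l : List CTree} (h : Separated l) {e e' : CTree}
    (he : e ∈ l) (he' : e' ∈ l) {p : ℕ+} (hp : p ∈ labs e) (hp' : p ∈ labs e') : e = e' := by
  by_contra hne
  have : Std.Symm fun s t : CTree => Disjoint (labs s) (labs t) := ⟨fun _ _ h => h.symm⟩
  exact Set.disjoint_left.mp (h.forall he he' hne) hp hp'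

theorem not_hasSubtreeLabels_of_separated {u r : List CTree} {x y : CTree}
    (h : Separated (u ++ x :: y :: r)) :
    ¬ HasSubtreeLabels (u ++ x :: y :: r) (labs x ∪ labs y) := by
  rintro ⟨e, he, s, hs, hlabs⟩
  obtain ⟨p, hp⟩ := labs_nonempty x
  obtain ⟨p', hp'⟩ := labs_nonempty y
  have hpe : p ∈ labs e := hs.labs_subset (hlabs ▸ Or.inl hp)
  have hp'e : p' ∈ labs e := hs.labs_subset (hlabs ▸ Or.inr hp')
  have hex : e = x := h.eq_of_mem_labs he (by simp) hpe hp
  have hey : e = y := h.eq_of_mem_labs he (by simp) hp'e hp'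
  have hxy : Disjoint (labs x) (labs y) := by
    simp only [Separated, List.pairwise_append, List.pairwise_cons] at h
    exact h.2.1.1 y (by simp)
  exact Set.disjoint_left.mp hxy hp (hex.symm.trans hey ▸ hp)

/-- Holds for all trees of a forest once the tree with labels `A` has been merged into one with
labels `B`, and is preserved by further merges. -/
def Glued (A B : Set ℕ+) (e : CTree) : Prop :=
  (labs e ∩ A).Nonempty →
    B ⊆ labs e ∧ ∀ s, IsSubtree s e → (labs s ∩ A).Nonempty → labs s ⊆ A ∨ B ⊆ labs s

theorem glued_of_disjoint {A B : Set ℕ+} {e : CTree} (h : Disjoint (labs e) A) : Glued A B e :=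
  fun hne => absurd h (Set.not_disjoint_iff_nonempty_inter.mpr hne)

theorem Glued.node {A B : Set ℕ+} {a b : CTree} (ha : Glued A B a) (hb : Glued A B b) :
    Glued A B (node a b) := by
  intro hne
  have hsub : B ⊆ labs a ∨ B ⊆ labs b := by
    simp only [labs, Set.union_inter_distrib_right, Set.union_nonempty] at hne
    exact hne.imp (fun h => (ha h).1) (fun h => (hb h).1)
  refine ⟨hsub.elim (·.trans Set.subset_union_left) (·.trans Set.subset_union_right), ?_⟩
  intro s hs hsA
  cases hs with
  | refl => exact Or.inr (hsub.elim (·.trans Set.subset_union_left)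
      (·.trans Set.subset_union_right))
  | left hs => exact (ha (hsA.mono (Set.inter_subset_inter_left _ hs.labs_subset))).2 s hs hsA
  | right hs => exact (hb (hsA.mono (Set.inter_subset_inter_left _ hs.labs_subset))).2 s hs hsA

theorem glued_mergeAt {A B : Set ℕ+} {l : List CTree} (h : ∀ e ∈ l, Glued A B e) (c : ℕ) :
    ∀ e ∈ mergeAt c l, Glued A B e := by
  rcases mergeAt_eq_or c l with hc | ⟨u, x, y, r, rfl, hc⟩ <;> rw [hc]
  · exact h
  · intro e he
    simp only [List.mem_append, List.mem_cons] at he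
    rcases he with he | rfl | he
    · exact h e (by simp [he])
    · exact (h x (by simp)).node (h y (by simp))
    · exact h e (by simp [he])

theorem glued_mergeWord {A B : Set ℕ+} {l : List CTree} (h : ∀ e ∈ l, Glued A B e)
    (w : List ℕ) : ∀ e ∈ mergeWord w l, Glued A B e := by
  induction w generalizing l with
  | nil => exact h
  | cons c w ih => exact ih (glued_mergeAt h c)

theorem not_hasSubtreeLabels_of_glued {A B S : Set ℕ+} {l : List CTree}
    (h : ∀ e ∈ l, Glued A B e) (hSA : (S ∩ A).Nonempty) (hS : ¬ S ⊆ A) (hB : ¬ B ⊆ S) :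
    ¬ HasSubtreeLabels l S := by
  rintro ⟨e, he, s, hs, rfl⟩
  exact ((h e he (hSA.mono (Set.inter_subset_inter_left _ hs.labs_subset))).2 s hs hSA).elim
    hS hB

theorem glued_node_left {e a : CTree} (h : Disjoint (labs e) (labs a)) :
    Glued (labs a) (labs (node e a)) (node e a) := by
  refine fun _ => ⟨le_rfl, fun s hs hsA => ?_⟩
  cases hs with
  | refl => exact Or.inr le_rfl
  | left hs =>
    obtain ⟨p, hp, hpa⟩ := hsA
    exact absurd hpa (Set.disjoint_left.mp h (hs.labs_subset hp))
  | right hs => exact Or.inl hs.labs_subset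

theorem glued_node_right {b e : CTree} (h : Disjoint (labs b) (labs e)) :
    Glued (labs b) (labs (node b e)) (node b e) := by
  refine fun _ => ⟨le_rfl, fun s hs hsA => ?_⟩
  cases hs with
  | refl => exact Or.inr le_rfl
  | left hs => exact Or.inl hs.labs_subset
  | right hs =>
    obtain ⟨p, hp, hpb⟩ := hsA
    exact absurd (hs.labs_subset hp) (Set.disjoint_left.mp h hpb)

theorem not_hasSubtreeLabels_of_absorbed {u r : List CTree} {E : CTree} {A B S : Set ℕ+}
    (hd : ∀ e ∈ u ++ r, Disjoint (labs e) A) (hE : Glued A B E) (hSA : (S ∩ A).Nonempty)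
    (hS : ¬ S ⊆ A) (hB : ¬ B ⊆ S) (w : List ℕ) :
    ¬ HasSubtreeLabels (mergeWord w (u ++ E :: r)) S := by
  refine not_hasSubtreeLabels_of_glued (glued_mergeWord (fun e he => ?_) w) hSA hS hB
  simp only [List.mem_append, List.mem_cons] at he
  rcases he with he | rfl | he
  · exact glued_of_disjoint (hd e (by simp [he]))
  · exact hE
  · exact glued_of_disjoint (hd e (by simp [he]))

theorem not_hasSubtreeLabels_of_merged_left {u m : List CTree} {e a b : CTree}
    (h : Separated (u ++ e :: a :: b :: m)) (w : List ℕ) :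
    ¬ HasSubtreeLabels (mergeWord w (u ++ node e a :: b :: m)) (labs a ∪ labs b) := by
  simp only [Separated, List.pairwise_append, List.pairwise_cons, List.mem_cons,
    forall_eq_or_imp] at h
  obtain ⟨-, ⟨⟨hea, heb, -⟩, ⟨hab, ham⟩, -⟩, hu⟩ := h
  obtain ⟨p, hp⟩ := labs_nonempty b
  obtain ⟨p', hp'⟩ := labs_nonempty e
  refine not_hasSubtreeLabels_of_absorbed (u := u) (r := b :: m) (fun x hx => ?_)
    (glued_node_left hea) ((labs_nonempty a).mono fun z hz => ⟨Or.inl hz, hz⟩)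
    (fun hS => Set.disjoint_left.mp hab (hS (Or.inr hp)) hp)
    (fun hB => (hB (Or.inl hp')).elim (Set.disjoint_left.mp hea hp')
      (Set.disjoint_left.mp heb hp')) w
  simp only [List.mem_append, List.mem_cons] at hx
  rcases hx with hx | rfl | hx
  · exact (hu x hx).2.1
  · exact hab.symm
  · exact (ham x hx).symm

theorem not_hasSubtreeLabels_of_merged_right {u m : List CTree} {a b e : CTree}
    (h : Separated (u ++ a :: b :: e :: m)) (w : List ℕ) :
    ¬ HasSubtreeLabels (mergeWord w (u ++ a :: node b e :: m)) (labs a ∪ labs b) := by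
  simp only [Separated, List.pairwise_append, List.pairwise_cons, List.mem_cons,
    forall_eq_or_imp] at h
  obtain ⟨-, ⟨⟨hab, hae, -⟩, ⟨hbe, hbm⟩, -⟩, hu⟩ := h
  obtain ⟨p, hp⟩ := labs_nonempty a
  obtain ⟨p', hp'⟩ := labs_nonempty e
  rw [← List.singleton_append, ← List.append_assoc]
  refine not_hasSubtreeLabels_of_absorbed (u := u ++ [a]) (r := m) (fun x hx => ?_)
    (glued_node_right hbe) ((labs_nonempty b).mono fun z hz => ⟨Or.inr hz, hz⟩)
    (fun hS => Set.disjoint_left.mp hab hp (hS (Or.inl hp)))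
    (fun hB => (hB (Or.inr hp')).elim (fun h' => Set.disjoint_left.mp hae h' hp')
      (fun h' => Set.disjoint_left.mp hbe h' hp')) w
  simp only [List.mem_append, List.mem_singleton] at hx
  rcases hx with (hx | rfl) | hx
  · exact (hu x hx).2.1
  · exact hab
  · exact (hbm x hx).symm

theorem not_hasSubtreeLabels_of_merged_neighbour {u m : List CTree} {a b : CTree}
    (h : Separated (u ++ a :: b :: m)) {c : ℕ} (hc : c + 1 = u.length ∨ c = u.length + 1)
    (hcl : c + 2 ≤ (u ++ a :: b :: m).length) (w : List ℕ) :
    ¬ HasSubtreeLabels (mergeWord w (mergeAt c (u ++ a :: b :: m))) (labs a ∪ labs b) := by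
  rcases hc with hc | rfl
  · obtain ⟨u, e, rfl⟩ := (List.eq_nil_or_concat' u).resolve_left (by rintro rfl; simp at hc)
    simp only [List.length_append, List.length_singleton, Nat.add_right_cancel_iff] at hc
    subst hc
    rw [List.append_assoc, List.singleton_append, mergeAt_length_append]
    exact not_hasSubtreeLabels_of_merged_left (by simpa using h) w
  · obtain ⟨e, r, rfl⟩ := List.exists_cons_of_length_pos (l := m)
      (by simp only [List.length_append, List.length_cons] at hcl; omega)
    have hmerge : mergeAt (u.length + 1) (u ++ a :: b :: e :: r) = u ++ a :: node b e :: r := by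
      simpa using mergeAt_length_append (u ++ [a]) b e r
    rw [hmerge]
    exact not_hasSubtreeLabels_of_merged_right h w

/-! ### Words with equal merges are equal -/

section Exchange

variable {P : Type*} [Monoid P] (y : ℕ → P)

def FactorsThrough (w : List ℕ) (p : ℕ) (l : List CTree) : Prop :=
  ∃ w', (w.map y).prod = y p * (w'.map y).prod ∧
    mergeWord w l = mergeWord w' (mergeAt p l) ∧ Admissible w' (l.length - 1)

variable {y}

theorem factorsThrough_cons_self {w : List ℕ} {p : ℕ} {l : List CTree}
    (hw : Admissible w (l.length - 1)) : FactorsThrough y (p :: w) p l :=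
  ⟨w, rfl, rfl, hw⟩

theorem factorsThrough_cons_of_left (hy : ∀ i j, i < j → y (j + 1) * y i = y i * y j)
    {w : List ℕ} {c q : ℕ} {l : List CTree} (hcq : c < q) (hq : q + 3 ≤ l.length)
    (hw : FactorsThrough y w q (mergeAt c l)) : FactorsThrough y (c :: w) (q + 1) l := by
  obtain ⟨w', hprod, hrun, hw'⟩ := hw
  have hlen := length_mergeAt (l := l) (c := c) (by omega)
  have hlen' := length_mergeAt (l := l) (c := q + 1) (by omega)
  refine ⟨c :: w', ?_, ?_, by omega, by convert hw' using 1; omega⟩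
  · simp only [List.map_cons, List.prod_cons, hprod, ← mul_assoc, hy c q hcq]
  · exact hrun.trans (by rw [← mergeAt_mergeAt_succ hcq]; rfl)

theorem factorsThrough_cons_of_right (hy : ∀ i j, i < j → y (j + 1) * y i = y i * y j)
    {w : List ℕ} {p j : ℕ} {l : List CTree} (hpj : p < j) (hj : j + 3 ≤ l.length)
    (hw : FactorsThrough y w p (mergeAt (j + 1) l)) : FactorsThrough y ((j + 1) :: w) p l := by
  obtain ⟨w', hprod, hrun, hw'⟩ := hw
  have hlen := length_mergeAt (l := l) (c := j + 1) (by omega)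
  have hlen' := length_mergeAt (l := l) (c := p) (by omega)
  refine ⟨j :: w', ?_, ?_, by omega, by convert hw' using 1; omega⟩
  · simp only [List.map_cons, List.prod_cons, hprod, ← mul_assoc, hy p j hpj]
  · exact hrun.trans (by rw [mergeAt_mergeAt_succ hpj]; rfl)

theorem factorsThrough_of_hasSubtreeLabels
    (hy : ∀ i j, i < j → y (j + 1) * y i = y i * y j) {a b : CTree} (w : List ℕ)
    (m₁ m₂ : List CTree) (hsep : Separated (m₁ ++ a :: b :: m₂))
    (hw : Admissible w (m₁ ++ a :: b :: m₂).length)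
    (hab : HasSubtreeLabels (mergeWord w (m₁ ++ a :: b :: m₂)) (labs a ∪ labs b)) :
    FactorsThrough y w m₁.length (m₁ ++ a :: b :: m₂) := by
  induction w generalizing m₁ m₂ with
  | nil => exact absurd hab (not_hasSubtreeLabels_of_separated hsep)
  | cons c w ih =>
    obtain ⟨hcl, hw⟩ := hw
    simp only [List.length_append, List.length_cons] at hcl hw
    change HasSubtreeLabels (mergeWord w (mergeAt c _)) _ at hab
    rcases (show c + 2 ≤ m₁.length ∨ (c + 1 = m₁.length ∨ c = m₁.length + 1) ∨
        c = m₁.length ∨ m₁.length + 2 ≤ c by omega) with hlt | hc | rfl | hgt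
    · have hm₁ := length_mergeAt hlt
      have hmerge := mergeAt_append_of_add_two_le (a :: b :: m₂) hlt
      rw [hmerge] at hab
      have := ih _ m₂ (hmerge ▸ hsep.mergeAt c)
        (by simp only [List.length_append, List.length_cons]; convert hw using 1; omega) hab
      rw [← hmerge] at this
      rw [← hm₁]
      exact factorsThrough_cons_of_left hy (by omega)
        (by simp only [List.length_append, List.length_cons]; omega) this
    · exact absurd hab (not_hasSubtreeLabels_of_merged_neighbour hsep hc
        (by simp only [List.length_append, List.length_cons]; omega) w)
    · exact factorsThrough_cons_self (by simpa using hw)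
    · obtain ⟨d, rfl⟩ : ∃ d, c = m₁.length + d + 2 := ⟨c - m₁.length - 2, by omega⟩
      have hm₂ := length_mergeAt (l := m₂) (c := d) (by omega)
      have hmerge : mergeAt (m₁.length + d + 2) (m₁ ++ a :: b :: m₂)
          = m₁ ++ a :: b :: mergeAt d m₂ := by
        simpa using mergeAt_append_of_le (m₁ ++ [a, b]) m₂ (c := m₁.length + d + 2) (by simp)
      rw [hmerge] at hab
      have := ih m₁ _ (hmerge ▸ hsep.mergeAt _)
        (by simp only [List.length_append, List.length_cons]; convert hw using 1; omega) hab
      rw [← hmerge] at this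
      exact factorsThrough_cons_of_right hy (j := m₁.length + d + 1) (by omega)
        (by simp only [List.length_append, List.length_cons]; omega) this

theorem prod_eq_of_mergeWord_eq (hy : ∀ i j, i < j → y (j + 1) * y i = y i * y j)
    {l : List CTree} (hl : Separated l) {u v : List ℕ} (hu : Admissible u l.length)
    (hv : Admissible v l.length) (h : mergeWord u l = mergeWord v l) :
    (u.map y).prod = (v.map y).prod := by
  induction v generalizing u l with
  | nil =>
    have := length_mergeWord hu
    rw [h] at this
    change l.length + u.length = l.length at this
    rw [List.length_eq_zero_iff.mp (by omega : u.length = 0)]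
  | cons b v ih =>
    obtain ⟨m₁, x, z, m₂, rfl, rfl⟩ := exists_eq_append_of_add_two_le hv.1
    obtain ⟨w, hprod, hrun, hw⟩ := factorsThrough_of_hasSubtreeLabels hy u m₁ m₂ hl hu
      (h ▸ (hasSubtreeLabels_mergeAt_length_append m₁ x z m₂).mergeWord v)
    have hlen := length_mergeAt hv.1
    rw [hprod, ih (hl.mergeAt _) (by convert hw using 1; omega) (by convert hv.2 using 1; omega)
      (hrun.symm.trans h)]
    rfl

end Exchange

/-! ### Fractions of positive words -/

section Fractions

variable {G : Type*} [Group G] {y : ℕ → G}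

theorem mul_inv_eq_inv_mul_of_lt (hy : ∀ i j, i < j → y (j + 1) * y i = y i * y j) {j m : ℕ}
    (h : j < m) : y j * (y m)⁻¹ = (y (m + 1))⁻¹ * y j := by
  rw [mul_inv_eq_iff_eq_mul, mul_assoc, ← hy j m h, ← mul_assoc, inv_mul_cancel, one_mul]

theorem mul_inv_eq_inv_mul_of_gt (hy : ∀ i j, i < j → y (j + 1) * y i = y i * y j) {j m : ℕ}
    (h : m < j) : y j * (y m)⁻¹ = (y m)⁻¹ * y (j + 1) := by
  rw [mul_inv_eq_iff_eq_mul, mul_assoc, hy m j h, ← mul_assoc, inv_mul_cancel, one_mul]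

theorem exists_mul_inv_eq (hy : ∀ i j, i < j → y (j + 1) * y i = y i * y j) (v : List ℕ)
    (i : ℕ) : (∃ v' : List ℕ, (v.map y).prod * (y i)⁻¹ = (v'.map y).prod) ∨
      ∃ (m : ℕ) (v' : List ℕ), (v.map y).prod * (y i)⁻¹ = (y m)⁻¹ * (v'.map y).prod := by
  induction v with
  | nil => exact Or.inr ⟨i, [], by simp⟩
  | cons j v ih =>
    simp only [List.map_cons, List.prod_cons, mul_assoc]
    rcases ih with ⟨v', hv'⟩ | ⟨m, v', hv'⟩
    · exact Or.inl ⟨j :: v', by simp [hv']⟩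
    · rw [hv', ← mul_assoc]
      rcases lt_trichotomy j m with hjm | rfl | hjm
      · exact Or.inr ⟨m + 1, j :: v', by simp [mul_inv_eq_inv_mul_of_lt hy hjm, mul_assoc]⟩
      · exact Or.inl ⟨v', by group⟩
      · exact Or.inr ⟨m, (j + 1) :: v', by simp [mul_inv_eq_inv_mul_of_gt hy hjm, mul_assoc]⟩

theorem exists_eq_inv_mul_of_mem_closure (hy : ∀ i j, i < j → y (j + 1) * y i = y i * y j)
    {x : G} (hx : x ∈ Subgroup.closure (Set.range y)) :
    ∃ u v : List ℕ, x = ((u.map y).prod)⁻¹ * (v.map y).prod := by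
  induction hx using Subgroup.closure_induction_right with
  | one => exact ⟨[], [], by simp⟩
  | mul_right x _ _ hi ih =>
    obtain ⟨i, rfl⟩ := hi
    obtain ⟨u, v, rfl⟩ := ih
    exact ⟨u, v ++ [i], by simp [mul_assoc]⟩
  | mul_inv_cancel x _ _ hi ih =>
    obtain ⟨i, rfl⟩ := hi
    obtain ⟨u, v, rfl⟩ := ih
    rcases exists_mul_inv_eq hy v i with ⟨v', hv'⟩ | ⟨m, v', hv'⟩
    · exact ⟨u, v', by rw [mul_assoc, hv']⟩
    · exact ⟨m :: u, v', by rw [mul_assoc, hv']; simp [mul_assoc]⟩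

end Fractions

/-! ### The generators `A_{1ⁿ}` of the presented group -/

def yGen (n : ℕ) : PresentedGroup relsA := PresentedGroup.of (ones n)

theorem of_mul_of_eq_of_mul_of {a b c d : Addr}
    (h : FreeGroup.of a * FreeGroup.of b * (FreeGroup.of c * FreeGroup.of d)⁻¹ ∈ relsA) :
    (PresentedGroup.of a : PresentedGroup relsA) * PresentedGroup.of b
      = PresentedGroup.of c * PresentedGroup.of d := by
  have := PresentedGroup.one_of_mem h
  simp only [map_mul, map_inv, mul_inv_eq_one] at this
  exact this

theorem ones_append_true_cons (k : ℕ) (α : Addr) : ones k ++ true :: α = ones (k + 1) ++ α := by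
  simp [ones, List.replicate_succ']

theorem ones_append_true_cons_ones (i k : ℕ) : ones i ++ true :: ones k = ones (i + k + 1) := by
  rw [ones, ones, ones, ← List.replicate_succ, ← List.replicate_add]
  rfl

theorem yGen_succ_mul_yGen {i j : ℕ} (h : i < j) : yGen (j + 1) * yGen i = yGen i * yGen j := by
  obtain ⟨k, rfl⟩ : ∃ k, j = i + k + 1 := ⟨j - i - 1, by omega⟩
  have := of_mul_of_eq_of_mul_of (a := ones i ++ true :: ones (k + 1)) (b := ones i)
    (c := ones i) (d := ones i ++ true :: ones k) ⟨ones i, Or.inr (Or.inl ⟨ones k, rfl⟩)⟩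
  rw [ones_append_true_cons_ones, ones_append_true_cons_ones] at this
  exact this

theorem of_mul_of_eq_pentagon (γ : Addr) :
    (PresentedGroup.of γ : PresentedGroup relsA) * PresentedGroup.of γ
      = PresentedGroup.of (γ ++ [true]) * PresentedGroup.of γ
        * PresentedGroup.of (γ ++ [false]) := by
  have := PresentedGroup.one_of_mem (rels := relsA) (x := FreeGroup.of γ * FreeGroup.of γ *
    (FreeGroup.of (γ ++ [true]) * FreeGroup.of γ * FreeGroup.of (γ ++ [false]))⁻¹)
    ⟨γ, Or.inr (Or.inr (Or.inr (Or.inr rfl)))⟩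
  simp only [map_mul, map_inv, mul_inv_eq_one] at this
  exact this

theorem of_ones_append_false_mem_closure (τ : Addr) (k : ℕ) :
    PresentedGroup.of (ones k ++ false :: τ) ∈ Subgroup.closure (Set.range yGen) := by
  have hy : ∀ n, yGen n ∈ Subgroup.closure (Set.range yGen) :=
    fun n => Subgroup.subset_closure ⟨n, rfl⟩
  induction τ generalizing k with
  | nil =>
    have := of_mul_of_eq_pentagon (ones k)
    rw [ones_append_true_cons, List.append_nil] at this
    rw [eq_inv_mul_of_mul_eq this.symm]
    exact mul_mem (inv_mem (mul_mem (hy _) (hy _))) (mul_mem (hy _) (hy _))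
  | cons b τ ih =>
    cases b
    · have := of_mul_of_eq_of_mul_of ⟨ones k, Or.inr (Or.inr (Or.inr (Or.inl ⟨τ, rfl⟩)))⟩
      rw [eq_inv_mul_of_mul_eq this.symm]
      exact mul_mem (inv_mem (hy _)) (mul_mem (ih k) (hy _))
    · have := of_mul_of_eq_of_mul_of ⟨ones k, Or.inr (Or.inr (Or.inl ⟨τ, rfl⟩))⟩
      rw [eq_inv_mul_of_mul_eq this.symm, ones_append_true_cons]
      exact mul_mem (inv_mem (hy _)) (mul_mem (ih (k + 1)) (hy _))

theorem closure_range_yGen : Subgroup.closure (Set.range yGen) = ⊤ := by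
  have key : ∀ α k, PresentedGroup.of (ones k ++ α) ∈ Subgroup.closure (Set.range yGen) := by
    intro α
    induction α with
    | nil => exact fun k => Subgroup.subset_closure ⟨k, by simp [yGen]⟩
    | cons b α ih =>
      cases b
      · exact of_ones_append_false_mem_closure α
      · exact fun k => ones_append_true_cons k α ▸ ih (k + 1)
  rw [eq_top_iff, ← PresentedGroup.closure_range_of relsA, Subgroup.closure_le]
  rintro _ ⟨α, rfl⟩
  exact key α 0

def leaves (n : ℕ) : List CTree := (List.range n).map fun k => leaf k.succPNat

theorem separated_leaves (n : ℕ) : Separated (leaves n) := by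
  refine List.pairwise_map.mpr ((List.nodup_range).imp fun hne => ?_)
  simpa [labs] using fun h => hne (Nat.succPNat_injective h)

/-! ### The canonical isomorphism -/

section CanonicalHom

variable {G : Type*} [Group G] (q : GeoA →* G)

theorem map_eq_of_coe_eq (hq : ∀ f g : GeoA, NearEq f.1 g.1 → q f = q g) {f g : GeoA}
    (h : (f : PMap) = g) : q f = q g :=
  hq f g (by rw [← h]; exact nearEq_self f.2)

theorem lift_eq_one_of_mem_relsA (hq : ∀ f g : GeoA, NearEq f.1 g.1 → q f = q g) :
    ∀ r ∈ relsA, FreeGroup.lift (fun α => q (assocAt α)) r = 1 := by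
  rintro r ⟨γ, ⟨α, β, rfl⟩ | ⟨α, rfl⟩ | ⟨α, rfl⟩ | ⟨α, rfl⟩ | rfl⟩ <;>
    simp only [map_mul, map_inv, FreeGroup.lift_apply_of, mul_inv_eq_one] <;>
    simp only [← map_mul q] <;>
    apply map_eq_of_coe_eq q hq <;>
    simp only [Submonoid.coe_mul, assocAt, applyAt_append, ← applyAt_mul]
  · rw [applyAt_false_comm_applyAt_true]
  · rw [applyAt_true_true_mul_opA]
  · rw [applyAt_true_false_mul_opA]
  · rw [applyAt_false_mul_opA]
  · rw [opA_pentagon]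

theorem map_applyAt_opAi (hq : ∀ f g : GeoA, NearEq f.1 g.1 → q f = q g) (α : Addr) :
    q ⟨applyAt α opAi, Submonoid.subset_closure ⟨α, Or.inr rfl⟩⟩ = (q (assocAt α))⁻¹ := by
  refine (inv_eq_of_mul_eq_one_right ?_).symm
  rw [← map_mul, ← map_one q]
  exact hq _ _ (nearEq_applyAt_opA_mul_opAi α)

noncomputable def liftAssoc (hq : ∀ f g : GeoA, NearEq f.1 g.1 → q f = q g) :
    PresentedGroup relsA →* G :=
  PresentedGroup.toGroup (lift_eq_one_of_mem_relsA q hq)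

variable (hq : ∀ f g : GeoA, NearEq f.1 g.1 → q f = q g)

theorem liftAssoc_of (α : Addr) : liftAssoc q hq (PresentedGroup.of α) = q (assocAt α) :=
  PresentedGroup.toGroup.of _

theorem liftAssoc_surjective (hsurj : Function.Surjective q) :
    Function.Surjective (liftAssoc q hq) := by
  suffices ∀ f (hf : f ∈ GeoA), q ⟨f, hf⟩ ∈ (liftAssoc q hq).range by
    intro g
    obtain ⟨⟨f, hf⟩, rfl⟩ := hsurj g
    exact this f hf
  intro f hf
  induction hf using Submonoid.closure_induction with
  | mem g hg =>
    obtain ⟨α, rfl | rfl⟩ := hg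
    · exact ⟨_, liftAssoc_of q hq α⟩
    · exact ⟨(PresentedGroup.of α)⁻¹, by rw [map_inv, liftAssoc_of, map_applyAt_opAi q hq]⟩
  | one => exact map_one q ▸ Subgroup.one_mem _
  | mul f g hf hg hf' hg' => exact (map_mul q ⟨f, hf⟩ ⟨g, hg⟩).symm ▸ Subgroup.mul_mem _ hf' hg'

theorem liftAssoc_prod_yGen (u : List ℕ) :
    liftAssoc q hq (u.map yGen).prod = q (assocWord u) := by
  simp only [map_list_prod, List.map_map, assocWord]
  congr 1
  exact List.map_congr_left fun c _ => liftAssoc_of q hq (ones c)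

theorem liftAssoc_injective (hq' : ∀ f g : GeoA, q f = q g → NearEq f.1 g.1) :
    Function.Injective (liftAssoc q hq) := by
  rw [injective_iff_map_eq_one]
  intro x hx
  obtain ⟨u, v, rfl⟩ := exists_eq_inv_mul_of_mem_closure (fun _ _ => yGen_succ_mul_yGen)
    (closure_range_yGen ▸ Subgroup.mem_top x)
  rw [map_mul, map_inv, inv_mul_eq_one, liftAssoc_prod_yGen, liftAssoc_prod_yGen] at hx
  set l := leaves (u.sum + v.sum + u.length + v.length + 1)
  have hlen : l.length = u.sum + v.sum + u.length + v.length + 1 := by simp [l, leaves]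
  have hu : Admissible u l.length := admissible_of_forall_le fun c hc => by
    have := List.le_sum_of_mem hc
    omega
  have hv : Admissible v l.length := admissible_of_forall_le fun c hc => by
    have := List.le_sum_of_mem hc
    omega
  have happ := (hq' _ _ hx).2 (comb l) (by simp [assocWord_apply_comb hu])
    (by simp [assocWord_apply_comb hv])
  rw [assocWord_apply_comb hu, assocWord_apply_comb hv] at happ
  rw [prod_eq_of_mergeWord_eq (fun _ _ => yGen_succ_mul_yGen) (separated_leaves _) hu hv
    (comb_injective (Option.some_injective _ happ)), inv_mul_cancel]

end CanonicalHom

end AssocGeometry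

open AssocGeometry

/-- Proposition 2.13: the relations `R_A` make a presentation of the geometry group
`G(A)` — i.e. of any group `G` obtained from the geometry monoid `𝒢(A)` by
identifying near-equal elements — in terms of the generators `A_α`: the canonical
homomorphism sending each generator to the class of `A_α` is an isomorphism. -/
theorem stmt9 (G : Type*) [Group G] (q : GeoA →* G)
    (hsurj : Function.Surjective q)
    (hiff : ∀ f g : GeoA, q f = q g ↔ NearEq f.1 g.1) :
    ∃ iso : PresentedGroup relsA ≃* G,
      ∀ α : Addr, iso (PresentedGroup.of α) = q ⟨applyAt α opA, memA α⟩ := by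
  have hq : ∀ f g : GeoA, NearEq f.1 g.1 → q f = q g := fun f g => (hiff f g).2
  exact ⟨MulEquiv.ofBijective (liftAssoc q hq)
    ⟨liftAssoc_injective q hq fun f g => (hiff f g).1, liftAssoc_surjective q hq hsurj⟩,
    liftAssoc_of q hq⟩
end

section
/- For all disjoint finite sets I, J of positive integers and every coloured tree t, the word c_{I,J}, acting letterwise via the operators c_i = C_{1^{i−1}} and s_i = S_{1^{i−1}}, maps the coloured right vine ⟨I ∪ J⟩ to ⟨I, J⟩, and the word s_{I,J} maps ⟨I ∪ J, t⟩ to ⟨I, J, t⟩. -/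
/-- Letters `c_i` and `s_i` (`i ≥ 1`). -/
inductive CS : Type
  | c : ℕ → CS
  | s : ℕ → CS

/-- Words in the letters `c_i`, `s_i`. -/
abbrev CSWord := List CS

/-- `∂w`: replace each index `i` by `i+1`. -/
def shiftCS (w : CSWord) : CSWord :=
  w.map (fun x => match x with | .c i => .c (i + 1) | .s i => .s (i + 1))

/-- The word `s₁s₂⋯s_p`. -/
def sseq (p : ℕ) : CSWord := (List.range p).map (fun i => CS.s (i + 1))

/-- The word `s₁s₂⋯s_{p-1}c_p` (empty for `p = 0`). -/
def cfin (p : ℕ) : CSWord :=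
  if p = 0 then [] else (List.range (p - 1)).map (fun i => CS.s (i + 1)) ++ [CS.c p]

/-- The words `c_{I,J}` (for `useC = true`) and `s_{I,J}` (for `useC = false`),
defined inductively by removing the least element `ℓ` of `I ∪ J`:
`c_{∅,∅} = s_{∅,∅} = ε`; `c_{{ℓ}∪I,J} = ∂c_{I,J}`; for `I` of cardinality `p`,
`c_{I,{ℓ}∪J} = s₁s₂⋯s_{p-1}c_p` if `J = ∅` and `∂c_{I,J}·s₁s₂⋯s_p` otherwise;
and `s_{I,J}` obeys the same rules except that `s_{I,{ℓ}} = s₁s₂⋯s_p`.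
(For disjoint `I`, `J`, erasing `ℓ` from both arguments agrees with the rules.) -/
def csword (useC : Bool) (I J : Finset ℕ+) : CSWord :=
  if h : (I ∪ J).Nonempty then
    if (I ∪ J).min' h ∈ I then
      shiftCS (csword useC (I.erase ((I ∪ J).min' h)) (J.erase ((I ∪ J).min' h)))
    else if J.erase ((I ∪ J).min' h) = ∅ then
      (if useC then cfin I.card else sseq I.card)
    else
      shiftCS (csword useC (I.erase ((I ∪ J).min' h)) (J.erase ((I ∪ J).min' h))) ++
        sseq I.card
  else []
termination_by (I ∪ J).card
decreasing_by
  all_goals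
    rw [← Finset.erase_union_distrib]
    exact Finset.card_erase_lt_of_mem (Finset.min'_mem _ h)

/-- Interpretation of letters: `c_i = C_{1^{i-1}}` and `s_i = S_{1^{i-1}}`. -/
def interpCS : CS → PMap
  | .c i => applyAt (List.replicate (i - 1) true) opC
  | .s i => applyAt (List.replicate (i - 1) true) opS

/-- Letterwise action of a word on a coloured tree, from left to right. -/
def runCS : CSWord → CTree → Option CTree
  | [], t => some t
  | x :: w, t => (interpCS x t).bind (runCS w)

/-- The coloured right vine on a list of labels (junk value for the empty list). -/
def vineOf : List ℕ+ → CTree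
  | [] => .leaf 1
  | [x] => .leaf x
  | x :: y :: l => .node (.leaf x) (vineOf (y :: l))

/-- `⟨l, t⟩`: the right vine with leaf labels `l` followed by the tree `t`. -/
def vineOfT : List ℕ+ → CTree → CTree
  | [], t => t
  | x :: l, t => .node (.leaf x) (vineOfT l t)

namespace CS

def index : CS → ℕ
  | c i => i
  | s i => i

def shift : CS → CS
  | c i => c (i + 1)
  | s i => s (i + 1)

end CS

lemma runCS_append (w₁ w₂ : CSWord) (t : CTree) :
    runCS (w₁ ++ w₂) t = (runCS w₁ t).bind (runCS w₂) := by
  induction w₁ generalizing t with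
  | nil => rfl
  | cons x w ih => simp only [runCS, List.cons_append, ih, Option.bind_assoc]

-- `c₀` and `c₁` both act at the root, so shifting commutes with grafting only from index `1` on.
lemma interpCS_shift_node {x : CS} (hx : 1 ≤ x.index) (s t : CTree) :
    interpCS x.shift (.node s t) = (interpCS x t).map (.node s) := by
  cases x with
  | c i => obtain ⟨k, rfl⟩ : ∃ k, i = k + 1 := ⟨i - 1, by simp [CS.index] at hx; omega⟩; rfl
  | s i => obtain ⟨k, rfl⟩ : ∃ k, i = k + 1 := ⟨i - 1, by simp [CS.index] at hx; omega⟩; rfl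

lemma runCS_shiftCS_node {w : CSWord} (hw : ∀ x ∈ w, 1 ≤ x.index) (s t : CTree) :
    runCS (shiftCS w) (.node s t) = (runCS w t).map (.node s) := by
  induction w generalizing t with
  | nil => rfl
  | cons x w ih =>
    rw [List.forall_mem_cons] at hw
    show (interpCS x.shift (.node s t)).bind (runCS (shiftCS w)) =
      ((interpCS x t).bind (runCS w)).map (.node s)
    rw [interpCS_shift_node hw.1]
    cases interpCS x t with
    | none => rfl
    | some u => exact ih hw.2 u

lemma one_le_index_of_mem_shiftCS {x : CS} {w : CSWord} (hx : x ∈ shiftCS w) : 1 ≤ x.index := by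
  obtain ⟨y, -, rfl⟩ := List.mem_map.mp hx
  cases y <;> simp [CS.index]

lemma one_le_index_of_mem_sseq {x : CS} {p : ℕ} (hx : x ∈ sseq p) : 1 ≤ x.index := by
  obtain ⟨i, -, rfl⟩ := List.mem_map.mp hx
  simp [CS.index]

lemma one_le_index_of_mem_cfin {x : CS} {p : ℕ} (hx : x ∈ cfin p) : 1 ≤ x.index := by
  unfold cfin at hx
  split_ifs at hx
  · simp at hx
  · rcases List.mem_append.mp hx with h | h
    · obtain ⟨i, -, rfl⟩ := List.mem_map.mp h
      simp [CS.index]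
    · rw [List.mem_singleton.mp h, CS.index]
      omega

lemma one_le_index_of_mem_csword {x : CS} {b : Bool} {I J : Finset ℕ+} (hx : x ∈ csword b I J) :
    1 ≤ x.index := by
  rw [csword] at hx
  split_ifs at hx
  · exact one_le_index_of_mem_shiftCS hx
  · exact one_le_index_of_mem_cfin hx
  · exact one_le_index_of_mem_sseq hx
  · rcases List.mem_append.mp hx with h | h
    · exact one_le_index_of_mem_shiftCS h
    · exact one_le_index_of_mem_sseq h
  · simp at hx

lemma vineOfT_append (l₁ l₂ : List ℕ+) (t : CTree) :
    vineOfT (l₁ ++ l₂) t = vineOfT l₁ (vineOfT l₂ t) := by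
  induction l₁ with
  | nil => rfl
  | cons x l ih => rw [List.cons_append, vineOfT, ih, vineOfT]

lemma vineOf_cons (x : ℕ+) {l : List ℕ+} (hl : l ≠ []) :
    vineOf (x :: l) = .node (.leaf x) (vineOf l) := by
  cases l with
  | nil => exact absurd rfl hl
  | cons y l => rfl

lemma vineOf_append (l₁ : List ℕ+) {l₂ : List ℕ+} (hl₂ : l₂ ≠ []) :
    vineOf (l₁ ++ l₂) = vineOfT l₁ (vineOf l₂) := by
  induction l₁ with
  | nil => rfl
  | cons x l ih => rw [List.cons_append, vineOf_cons x (by simp [hl₂]), ih, vineOfT]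

lemma sseq_succ (p : ℕ) : sseq (p + 1) = CS.s 1 :: shiftCS (sseq p) := by
  simp [sseq, shiftCS, List.range_succ_eq_map, Function.comp_def]

lemma runCS_sseq (m : ℕ+) (l : List ℕ+) (t : CTree) :
    runCS (sseq l.length) (.node (.leaf m) (vineOfT l t)) =
      some (vineOfT l (.node (.leaf m) t)) := by
  induction l generalizing t with
  | nil => rfl
  | cons x l ih =>
    rw [List.length_cons, sseq_succ]
    show runCS (shiftCS (sseq l.length)) (.node (.leaf x) (.node (.leaf m) (vineOfT l t))) = _
    rw [runCS_shiftCS_node (fun _ => one_le_index_of_mem_sseq), ih]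
    rfl

lemma applyAt_replicate_vineOfT (f : PMap) (l : List ℕ+) (u : CTree) :
    applyAt (List.replicate l.length true) f (vineOfT l u) = (f u).map (vineOfT l) := by
  induction l with
  | nil => exact Option.map_id'.symm
  | cons x l ih =>
    show (applyAt (List.replicate l.length true) f (vineOfT l u)).map _ = _
    rw [ih, Option.map_map]
    rfl

lemma cfin_succ (p : ℕ) : cfin (p + 1) = sseq p ++ [CS.c (p + 1)] := by
  simp [cfin, sseq]

lemma runCS_cfin (m : ℕ+) (l : List ℕ+) :
    runCS (cfin l.length) (vineOf (m :: l)) = some (vineOf (l ++ [m])) := by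
  rcases List.eq_nil_or_concat' l with rfl | ⟨l, z, rfl⟩
  · rfl
  have hvine : vineOf (m :: (l ++ [z])) = .node (.leaf m) (vineOfT l (.leaf z)) := by
    rw [vineOf_cons m (by simp), vineOf_append l (List.cons_ne_nil z [])]
    rfl
  rw [List.length_append, List.length_singleton, cfin_succ, runCS_append, hvine, runCS_sseq]
  show (applyAt (List.replicate l.length true) opC _).bind (runCS []) = _
  rw [applyAt_replicate_vineOfT, List.append_assoc, vineOf_append l (by simp)]
  rfl

namespace Finset

variable {α : Type*} [LinearOrder α]

@[elab_as_elim]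
theorem induction_on_min_of_disjoint {motive : Finset α → Finset α → Prop}
    (empty : motive ∅ ∅)
    (insert_left : ∀ a I J, (∀ x ∈ I ∪ J, a < x) → motive I J → motive (insert a I) J)
    (insert_right : ∀ a I J, (∀ x ∈ I ∪ J, a < x) → motive I J → motive I (insert a J))
    (I J : Finset α) (h : Disjoint I J) : motive I J := by
  obtain ⟨U, hU⟩ : ∃ U, I ∪ J = U := ⟨_, rfl⟩
  induction U using Finset.induction_on_min generalizing I J with
  | empty =>
    obtain ⟨rfl, rfl⟩ := union_eq_empty.mp hU
    exact empty
  | insert a U ha ih =>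
    have haU : a ∉ U := fun haU => (ha a haU).false
    have hU' : (I ∪ J).erase a = U := by rw [hU, erase_insert haU]
    rcases mem_union.mp (hU ▸ mem_insert_self a U : a ∈ I ∪ J) with haI | haJ
    · have hIJ : I.erase a ∪ J = U := by
        rwa [erase_union_distrib, erase_eq_of_notMem (disjoint_left.mp h haI)] at hU'
      rw [← insert_erase haI]
      exact insert_left a _ J (hIJ ▸ ha) (ih _ J (h.mono_left (erase_subset a I)) hIJ)
    · have hIJ : I ∪ J.erase a = U := by
        rwa [erase_union_distrib, erase_eq_of_notMem (disjoint_right.mp h haJ)] at hU'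
      rw [← insert_erase haJ]
      exact insert_right a I _ (hIJ ▸ ha) (ih I _ (h.mono_right (erase_subset a J)) hIJ)

theorem sort_insert_of_forall_lt {a : α} {s : Finset α} (ha : ∀ x ∈ s, a < x) :
    (insert a s).sort (· ≤ ·) = a :: s.sort (· ≤ ·) :=
  sort_insert _ (fun x hx => (ha x hx).le) fun h => lt_irrefl a (ha a h)

theorem min'_insert_of_forall_lt {a : α} {s : Finset α} (ha : ∀ x ∈ s, a < x)
    (H : (insert a s).Nonempty) : (insert a s).min' H = a :=
  (min'_eq_iff _ _ a).mpr ⟨mem_insert_self a s, by simpa using fun x hx => (ha x hx).le⟩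

theorem sort_ne_nil {s : Finset α} (hs : s.Nonempty) : s.sort (· ≤ ·) ≠ [] :=
  List.ne_nil_of_length_pos (by rw [length_sort]; exact hs.card_pos)

end Finset

section csword

open Finset

variable {a : ℕ+} {I J : Finset ℕ+}

lemma csword_empty (b : Bool) : csword b ∅ ∅ = [] := by
  rw [csword, dif_neg (by simp)]

lemma csword_insert_left (b : Bool) (ha : ∀ x ∈ I ∪ J, a < x) :
    csword b (insert a I) J = shiftCS (csword b I J) := by
  have haI : a ∉ I := fun h => lt_irrefl a (ha a (mem_union_left J h))
  have haJ : a ∉ J := fun h => lt_irrefl a (ha a (mem_union_right I h))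
  rw [csword, dif_pos (by simp)]
  simp only [insert_union, min'_insert_of_forall_lt ha]
  rw [if_pos (mem_insert_self a I), erase_insert haI, erase_eq_of_notMem haJ]

lemma csword_insert_right (b : Bool) (ha : ∀ x ∈ I ∪ J, a < x) (hJ : J.Nonempty) :
    csword b I (insert a J) = shiftCS (csword b I J) ++ sseq #I := by
  have haI : a ∉ I := fun h => lt_irrefl a (ha a (mem_union_left J h))
  have haJ : a ∉ J := fun h => lt_irrefl a (ha a (mem_union_right I h))
  rw [csword, dif_pos (by simp)]
  simp only [union_insert, min'_insert_of_forall_lt ha]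
  rw [if_neg haI, erase_insert haJ, if_neg hJ.ne_empty, erase_eq_of_notMem haI]

lemma csword_singleton_right (b : Bool) (ha : ∀ x ∈ I, a < x) :
    csword b I {a} = if b then cfin #I else sseq #I := by
  have haI : a ∉ I := fun h => lt_irrefl a (ha a h)
  rw [csword, dif_pos (by simp)]
  simp only [union_singleton, min'_insert_of_forall_lt ha]
  rw [if_neg haI, erase_singleton, if_pos rfl]

end csword

section runCS_csword

open Finset

theorem runCS_csword_true (I J : Finset ℕ+) (h : Disjoint I J) :
    runCS (csword true I J) (vineOf ((I ∪ J).sort (· ≤ ·))) =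
      some (vineOf (I.sort (· ≤ ·) ++ J.sort (· ≤ ·))) := by
  refine induction_on_min_of_disjoint ?_ (fun a I J ha ih => ?_) (fun a I J ha ih => ?_) I J h
  · rw [csword_empty, union_empty, sort_empty]; rfl
  · rw [csword_insert_left true ha, insert_union, sort_insert_of_forall_lt ha,
      sort_insert_of_forall_lt fun x hx => ha x (mem_union_left J hx), List.cons_append]
    rcases (I ∪ J).eq_empty_or_nonempty with hIJ | ⟨x, hx⟩
    · obtain ⟨rfl, rfl⟩ := union_eq_empty.mp hIJ
      rw [csword_empty, union_empty, sort_empty]; rfl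
    have hIJ : I.sort (· ≤ ·) ++ J.sort (· ≤ ·) ≠ [] :=
      List.ne_nil_of_mem (a := x) (by simpa [List.mem_append, mem_sort] using mem_union.mp hx)
    rw [vineOf_cons a (sort_ne_nil ⟨x, hx⟩),
      runCS_shiftCS_node (fun _ => one_le_index_of_mem_csword), ih, Option.map_some,
      vineOf_cons a hIJ]
  · have haI : ∀ x ∈ I, a < x := fun x hx => ha x (mem_union_left J hx)
    rcases J.eq_empty_or_nonempty with rfl | hJ
    · rw [insert_empty, csword_singleton_right true haI, if_pos rfl, union_singleton,
        sort_insert_of_forall_lt haI, sort_singleton, ← length_sort (· ≤ ·), runCS_cfin]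
    have hJne := sort_ne_nil hJ
    rw [csword_insert_right true ha hJ, union_insert, sort_insert_of_forall_lt ha,
      sort_insert_of_forall_lt fun x hx => ha x (mem_union_right I hx), runCS_append,
      vineOf_cons a (sort_ne_nil (hJ.mono subset_union_right)),
      runCS_shiftCS_node (fun _ => one_le_index_of_mem_csword), ih, Option.map_some,
      Option.bind_some, vineOf_append _ hJne, ← length_sort (· ≤ ·), runCS_sseq,
      vineOf_append _ (List.cons_ne_nil _ _), vineOf_cons a hJne]

theorem runCS_csword_false (I J : Finset ℕ+) (h : Disjoint I J) (t : CTree) :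
    runCS (csword false I J) (vineOfT ((I ∪ J).sort (· ≤ ·)) t) =
      some (vineOfT (I.sort (· ≤ ·) ++ J.sort (· ≤ ·)) t) := by
  refine induction_on_min_of_disjoint ?_ (fun a I J ha ih => ?_) (fun a I J ha ih => ?_) I J h
  · rw [csword_empty, union_empty, sort_empty]; rfl
  · rw [csword_insert_left false ha, insert_union, sort_insert_of_forall_lt ha,
      sort_insert_of_forall_lt fun x hx => ha x (mem_union_left J hx), List.cons_append,
      vineOfT, runCS_shiftCS_node (fun _ => one_le_index_of_mem_csword), ih]
    rfl
  · have haI : ∀ x ∈ I, a < x := fun x hx => ha x (mem_union_left J hx)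
    rcases J.eq_empty_or_nonempty with rfl | hJ
    · rw [insert_empty, csword_singleton_right false haI, if_neg Bool.false_ne_true,
        union_singleton, sort_insert_of_forall_lt haI, sort_singleton, vineOfT,
        ← length_sort (· ≤ ·), runCS_sseq, vineOfT_append]
      rfl
    rw [csword_insert_right false ha hJ, union_insert, sort_insert_of_forall_lt ha,
      sort_insert_of_forall_lt fun x hx => ha x (mem_union_right I hx), runCS_append, vineOfT,
      runCS_shiftCS_node (fun _ => one_le_index_of_mem_csword), ih, Option.map_some,
      Option.bind_some, vineOfT_append, ← length_sort (· ≤ ·), runCS_sseq, vineOfT_append]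
    rfl

end runCS_csword

/-- Lemma 3.9: for disjoint finite sets `I, J` of positive integers and every
coloured tree `t`, the word `c_{I,J}` maps the coloured right vine `⟨I ∪ J⟩` to
`⟨I, J⟩`, and the word `s_{I,J}` maps `⟨I ∪ J, t⟩` to `⟨I, J, t⟩`. -/
theorem stmt12 (I J : Finset ℕ+) (hdisj : Disjoint I J) :
    runCS (csword true I J) (vineOf ((I ∪ J).sort (· ≤ ·))) =
      some (vineOf (I.sort (· ≤ ·) ++ J.sort (· ≤ ·))) ∧
    ∀ t : CTree,
      runCS (csword false I J) (vineOfT ((I ∪ J).sort (· ≤ ·)) t) =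
        some (vineOfT (I.sort (· ≤ ·) ++ J.sort (· ≤ ·)) t) :=
  ⟨runCS_csword_true I J hdisj, runCS_csword_false I J hdisj⟩
end

section
/- Let G be a group containing elements a_i, c_i (i ≥ 1) satisfying all relations of R_ac, and set s_i = c_i·a_i⁻¹·c_{i+1}⁻¹. Then the following relations of R_acs all hold in G: a_i·x_{j−1} = x_j·a_i and s_i·x_j = x_j·s_i for j ≥ i+2 and x ∈ {a, c, s}; s_i·s_{i+1}·a_i = a_{i+1}·s_i and s_{i+1}·s_i·a_{i+1} = a_i·s_i; and s_i·x_{i+1}·s_i = x_{i+1}·s_i·x_{i+1} for x ∈ {s, c}. Furthermore, if in addition c_i² = 1 holds for all i, then s_i² = 1 holds for all i. -/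
/-!
Relations (3.15) and (3.16) for `s` follow from those for `a` and `c`: conjugation by `a_i`
shifts both `a` and `c` by one index, hence also `s_j = c_j·a_j⁻¹·c_{j+1}⁻¹`, and an element
commuting with `a_j, c_j, c_{j+1}` commutes with `s_j`. The relations between neighbouring
indices are direct word computations in `a_i, a_{i+1}, c_i, c_{i+1}, c_{i+2}`, and once
`c_i² = 1`, the relation `s_i² = 1` is a rewriting of (3.9).
-/

-- `a₁, a₂, c₁, c₂, c₃` stand for `a_i, a_{i+1}, c_i, c_{i+1}, c_{i+2}`, so that
-- `c₁ * a₁⁻¹ * c₂⁻¹` and `c₂ * a₂⁻¹ * c₃⁻¹` are `s_i` and `s_{i+1}`.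
section
variable {G : Type*} [Group G] {a₁ a₂ c₁ c₂ c₃ : G}

theorem SemiconjBy.mul_inv_mul_inv {x c c' a a' d d' : G} (hc : SemiconjBy x c c')
    (ha : SemiconjBy x a a') (hd : SemiconjBy x d d') :
    SemiconjBy x (c * a⁻¹ * d⁻¹) (c' * a'⁻¹ * d'⁻¹) :=
  (hc.mul_right ha.inv_right).mul_right hd.inv_right

theorem s_mul_self_eq_one (h39 : a₁ * c₁ * c₂ * a₁ = c₂ * c₁)
    (hc₁ : c₁ * c₁ = 1) (hc₂ : c₂ * c₂ = 1) :
    c₁ * a₁⁻¹ * c₂⁻¹ * (c₁ * a₁⁻¹ * c₂⁻¹) = 1 := by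
  rw [inv_eq_of_mul_eq_one_right hc₂]
  calc c₁ * a₁⁻¹ * c₂ * (c₁ * a₁⁻¹ * c₂)
    _ = c₁ * a₁⁻¹ * (a₁ * c₁ * c₂ * a₁) * a₁⁻¹ * c₂ := by rw [h39]; group
    _ = c₁ * c₁ * (c₂ * c₂) := by group
    _ = 1 := by rw [hc₁, hc₂, mul_one]

theorem s_mul_c_succ_mul_s (h310 : c₂ * c₁ * a₁⁻¹ * c₂ = c₁ * a₁⁻¹ * c₁ * a₁⁻¹) :
    c₁ * a₁⁻¹ * c₂⁻¹ * c₂ * (c₁ * a₁⁻¹ * c₂⁻¹) = c₂ * (c₁ * a₁⁻¹ * c₂⁻¹) * c₂ :=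
  calc c₁ * a₁⁻¹ * c₂⁻¹ * c₂ * (c₁ * a₁⁻¹ * c₂⁻¹)
    _ = c₂ * c₁ * a₁⁻¹ * c₂ * c₂⁻¹ * c₂⁻¹ * c₂ := by rw [h310]; group
    _ = c₂ * (c₁ * a₁⁻¹ * c₂⁻¹) * c₂ := by group

theorem s_mul_s_succ_mul_a (h36 : a₁ * c₂ = c₃ * a₁) (h38 : a₂ * a₁ * c₁⁻¹ * a₂ = a₁ * a₁ * c₁⁻¹) :
    c₁ * a₁⁻¹ * c₂⁻¹ * (c₂ * a₂⁻¹ * c₃⁻¹) * a₁ = a₂ * (c₁ * a₁⁻¹ * c₂⁻¹) :=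
  calc c₁ * a₁⁻¹ * c₂⁻¹ * (c₂ * a₂⁻¹ * c₃⁻¹) * a₁
    _ = c₁ * a₁⁻¹ * a₂⁻¹ * c₃⁻¹ * (c₃ * a₁) * c₂⁻¹ := by rw [← h36]; group
    _ = a₂ * (a₁ * a₁ * c₁⁻¹)⁻¹ * a₁ * c₂⁻¹ := by rw [← h38]; group
    _ = a₂ * (c₁ * a₁⁻¹ * c₂⁻¹) := by group

theorem s_succ_mul_s_mul_a_succ (h36 : a₁ * c₂ = c₃ * a₁)
    (h38 : a₂ * a₁ * c₁⁻¹ * a₂ = a₁ * a₁ * c₁⁻¹)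
    (h39₁ : a₁ * c₁ * c₂ * a₁ = c₂ * c₁) (h39₂ : a₂ * c₂ * c₃ * a₂ = c₃ * c₂)
    (h37 : c₁ * a₁⁻¹ * c₂⁻¹ * c₃ = c₃ * (c₁ * a₁⁻¹ * c₂⁻¹)) :
    c₂ * a₂⁻¹ * c₃⁻¹ * (c₁ * a₁⁻¹ * c₂⁻¹) * a₂ = a₁ * (c₁ * a₁⁻¹ * c₂⁻¹) :=
  calc c₂ * a₂⁻¹ * c₃⁻¹ * (c₁ * a₁⁻¹ * c₂⁻¹) * a₂
    _ = c₂ * a₂⁻¹ * c₃⁻¹ * (c₃ * (c₁ * a₁⁻¹ * c₂⁻¹)) * c₃⁻¹ * a₂ := by rw [← h37]; group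
    _ = c₂ * a₂⁻¹ * c₁ * a₁⁻¹ * (a₂ * c₂ * c₃ * a₂)⁻¹ * a₂ := by rw [h39₂]; group
    _ = c₂ * (a₁ * a₁ * c₁⁻¹)⁻¹ * c₃⁻¹ * c₂⁻¹ := by rw [← h38]; group
    _ = c₂ * c₁ * a₁⁻¹ * (a₁ * c₂)⁻¹ * c₂⁻¹ := by rw [h36]; group
    _ = a₁ * c₁ * c₂ * a₁ * a₁⁻¹ * c₂⁻¹ * a₁⁻¹ * c₂⁻¹ := by rw [h39₁]; group
    _ = a₁ * (c₁ * a₁⁻¹ * c₂⁻¹) := by group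

theorem s_mul_s_succ_mul_s (h36 : a₁ * c₂ = c₃ * a₁) (h38 : a₂ * a₁ * c₁⁻¹ * a₂ = a₁ * a₁ * c₁⁻¹)
    (h39 : a₁ * c₁ * c₂ * a₁ = c₂ * c₁)
    (h310₁ : c₂ * c₁ * a₁⁻¹ * c₂ = c₁ * a₁⁻¹ * c₁ * a₁⁻¹)
    (h310₂ : c₃ * c₂ * a₂⁻¹ * c₃ = c₂ * a₂⁻¹ * c₂ * a₂⁻¹) :
    c₁ * a₁⁻¹ * c₂⁻¹ * (c₂ * a₂⁻¹ * c₃⁻¹) * (c₁ * a₁⁻¹ * c₂⁻¹) =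
      c₂ * a₂⁻¹ * c₃⁻¹ * (c₁ * a₁⁻¹ * c₂⁻¹) * (c₂ * a₂⁻¹ * c₃⁻¹) :=
  calc c₁ * a₁⁻¹ * c₂⁻¹ * (c₂ * a₂⁻¹ * c₃⁻¹) * (c₁ * a₁⁻¹ * c₂⁻¹)
    _ = a₂ * (c₁ * a₁⁻¹ * c₂⁻¹) * a₁⁻¹ * (c₁ * a₁⁻¹ * c₂⁻¹) := by
      rw [← s_mul_s_succ_mul_a h36 h38]; group
    _ = a₂ * c₁ * a₁⁻¹ * c₂⁻¹ * c₁⁻¹ * (c₂ * c₁ * a₁⁻¹ * c₂) * c₂⁻¹ := by rw [h310₁]; group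
    _ = a₂ * c₂⁻¹ * (a₁ * c₁ * c₂ * a₁) * a₁⁻¹ * c₂⁻¹ * c₁⁻¹ * c₂ * c₁ * a₁⁻¹ := by
      rw [h39]; group
    _ = a₂ * c₂⁻¹ * (c₃ * a₁) * c₁ * c₂ * (c₃ * a₁)⁻¹ := by rw [← h36]; group
    _ = a₂ * c₂⁻¹ * c₃ * (c₂ * c₁) * a₁⁻¹ * a₁⁻¹ * c₃⁻¹ := by rw [← h39]; group
    _ = a₂ * c₂⁻¹ * (c₂ * a₂⁻¹ * c₂ * a₂⁻¹) * c₃⁻¹ * a₂ * (a₁ * a₁ * c₁⁻¹)⁻¹ * c₃⁻¹ := by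
      rw [← h310₂]; group
    _ = c₂ * a₂⁻¹ * c₃⁻¹ * (c₁ * a₁⁻¹ * c₂⁻¹) * (c₂ * a₂⁻¹ * c₃⁻¹) := by rw [← h38]; group

end

theorem stmt13_general {G : Type*} [Group G] (a c : ℕ → G)
    -- R_ac, relations (3.6):
    (h36a : ∀ i j : ℕ, 1 ≤ i → i + 2 ≤ j → a i * a (j - 1) = a j * a i)
    (h36c : ∀ i j : ℕ, 1 ≤ i → i + 2 ≤ j → a i * c (j - 1) = c j * a i)
    -- R_ac, relations (3.7):
    (h37a : ∀ i j : ℕ, 1 ≤ i → i + 2 ≤ j →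
      (c i * (a i)⁻¹ * (c (i + 1))⁻¹) * a j = a j * (c i * (a i)⁻¹ * (c (i + 1))⁻¹))
    (h37c : ∀ i j : ℕ, 1 ≤ i → i + 2 ≤ j →
      (c i * (a i)⁻¹ * (c (i + 1))⁻¹) * c j = c j * (c i * (a i)⁻¹ * (c (i + 1))⁻¹))
    -- R_ac, relations (3.8) for e = 1 and e = -1:
    (h38m : ∀ i : ℕ, 1 ≤ i →
      a (i + 1) * a i * (c i)⁻¹ * a (i + 1) = a i * a i * (c i)⁻¹)
    -- R_ac, relation (3.9):
    (h39 : ∀ i : ℕ, 1 ≤ i → a i * c i * c (i + 1) * a i = c (i + 1) * c i)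
    -- R_ac, relation (3.10):
    (h310 : ∀ i : ℕ, 1 ≤ i →
      c (i + 1) * c i * (a i)⁻¹ * c (i + 1) = c i * (a i)⁻¹ * c i * (a i)⁻¹)
    -- `s_i = c_i·a_i⁻¹·c_{i+1}⁻¹`:
    (s : ℕ → G) (hs : ∀ i : ℕ, s i = c i * (a i)⁻¹ * (c (i + 1))⁻¹) :
    -- R_acs, relations (3.15):
    (∀ i j : ℕ, 1 ≤ i → i + 2 ≤ j →
      a i * a (j - 1) = a j * a i ∧ a i * c (j - 1) = c j * a i ∧
      a i * s (j - 1) = s j * a i) ∧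
    -- R_acs, relations (3.16):
    (∀ i j : ℕ, 1 ≤ i → i + 2 ≤ j →
      s i * a j = a j * s i ∧ s i * c j = c j * s i ∧ s i * s j = s j * s i) ∧
    -- R_acs, relations (3.17):
    (∀ i : ℕ, 1 ≤ i →
      s i * s (i + 1) * a i = a (i + 1) * s i ∧
      s (i + 1) * s i * a (i + 1) = a i * s i) ∧
    -- R_acs, relations (3.18):
    (∀ i : ℕ, 1 ≤ i →
      s i * s (i + 1) * s i = s (i + 1) * s i * s (i + 1) ∧
      s i * c (i + 1) * s i = c (i + 1) * s i * c (i + 1)) ∧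
    -- torsion:
    ((∀ i : ℕ, 1 ≤ i → c i * c i = 1) → ∀ i : ℕ, 1 ≤ i → s i * s i = 1) := by
  obtain rfl : s = fun i => c i * (a i)⁻¹ * (c (i + 1))⁻¹ := funext hs
  have h36c_succ : ∀ i, 1 ≤ i → a i * c (i + 1) = c (i + 2) * a i :=
    fun i hi => h36c i (i + 2) hi le_rfl
  refine ⟨fun i j hi hij => ⟨h36a i j hi hij, h36c i j hi hij, ?_⟩,
    fun i j hi hij => ⟨h37a i j hi hij, h37c i j hi hij, ?_⟩,
    fun i hi => ⟨s_mul_s_succ_mul_a (h36c_succ i hi) (h38m i hi),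
      s_succ_mul_s_mul_a_succ (h36c_succ i hi) (h38m i hi) (h39 i hi) (h39 (i + 1) (by omega))
        (h37c i (i + 2) hi le_rfl)⟩,
    fun i hi => ⟨s_mul_s_succ_mul_s (h36c_succ i hi) (h38m i hi) (h39 i hi) (h310 i hi)
        (h310 (i + 1) (by omega)),
      s_mul_c_succ_mul_s (h310 i hi)⟩,
    fun hc i hi => s_mul_self_eq_one (h39 i hi) (hc i hi) (hc (i + 1) (by omega))⟩
  · obtain ⟨k, rfl⟩ : ∃ k, j = k + 1 := ⟨j - 1, by omega⟩
    exact SemiconjBy.mul_inv_mul_inv (h36c i (k + 1) hi hij) (h36a i (k + 1) hi hij)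
      (h36c i (k + 2) hi (by omega))
  · exact SemiconjBy.mul_inv_mul_inv (h37c i j hi hij) (h37a i j hi hij)
      (h37c i (j + 1) hi (by omega))

/-- Lemma 3.12: if elements `a_i, c_i` (`i ≥ 1`) of a group `G` satisfy the
relations `R_ac`, then, setting `s_i = c_i·a_i⁻¹·c_{i+1}⁻¹`, all relations of
`R_acs` hold in `G`; moreover, if in addition `c_i² = 1` holds for all `i`, then
`s_i² = 1` holds for all `i`. -/
theorem stmt13 {G : Type*} [Group G] (a c : ℕ → G)
    -- R_ac, relations (3.6):
    (h36a : ∀ i j : ℕ, 1 ≤ i → i + 2 ≤ j → a i * a (j - 1) = a j * a i)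
    (h36c : ∀ i j : ℕ, 1 ≤ i → i + 2 ≤ j → a i * c (j - 1) = c j * a i)
    -- R_ac, relations (3.7):
    (h37a : ∀ i j : ℕ, 1 ≤ i → i + 2 ≤ j →
      (c i * (a i)⁻¹ * (c (i + 1))⁻¹) * a j = a j * (c i * (a i)⁻¹ * (c (i + 1))⁻¹))
    (h37c : ∀ i j : ℕ, 1 ≤ i → i + 2 ≤ j →
      (c i * (a i)⁻¹ * (c (i + 1))⁻¹) * c j = c j * (c i * (a i)⁻¹ * (c (i + 1))⁻¹))
    -- R_ac, relations (3.8) for e = 1 and e = -1: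
    (h38p : ∀ i : ℕ, 1 ≤ i → a (i + 1) * a i * c i * a (i + 1) = a i * a i * c i)
    (h38m : ∀ i : ℕ, 1 ≤ i →
      a (i + 1) * a i * (c i)⁻¹ * a (i + 1) = a i * a i * (c i)⁻¹)
    -- R_ac, relation (3.9):
    (h39 : ∀ i : ℕ, 1 ≤ i → a i * c i * c (i + 1) * a i = c (i + 1) * c i)
    -- R_ac, relation (3.10):
    (h310 : ∀ i : ℕ, 1 ≤ i →
      c (i + 1) * c i * (a i)⁻¹ * c (i + 1) = c i * (a i)⁻¹ * c i * (a i)⁻¹)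
    -- `s_i = c_i·a_i⁻¹·c_{i+1}⁻¹`:
    (s : ℕ → G) (hs : ∀ i : ℕ, s i = c i * (a i)⁻¹ * (c (i + 1))⁻¹) :
    -- R_acs, relations (3.15):
    (∀ i j : ℕ, 1 ≤ i → i + 2 ≤ j →
      a i * a (j - 1) = a j * a i ∧ a i * c (j - 1) = c j * a i ∧
      a i * s (j - 1) = s j * a i) ∧
    -- R_acs, relations (3.16):
    (∀ i j : ℕ, 1 ≤ i → i + 2 ≤ j →
      s i * a j = a j * s i ∧ s i * c j = c j * s i ∧ s i * s j = s j * s i) ∧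
    -- R_acs, relations (3.17):
    (∀ i : ℕ, 1 ≤ i →
      s i * s (i + 1) * a i = a (i + 1) * s i ∧
      s (i + 1) * s i * a (i + 1) = a i * s i) ∧
    -- R_acs, relations (3.18):
    (∀ i : ℕ, 1 ≤ i →
      s i * s (i + 1) * s i = s (i + 1) * s i * s (i + 1) ∧
      s i * c (i + 1) * s i = c (i + 1) * s i * c (i + 1)) ∧
    -- torsion:
    ((∀ i : ℕ, 1 ≤ i → c i * c i = 1) → ∀ i : ℕ, 1 ≤ i → s i * s i = 1) :=
  stmt13_general a c h36a h36c h37a h37c h38m h39 h310 s hs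
end

section
/- Let the set of coloured trees be equipped with an arbitrary binary operation (t₁, t₂) ↦ t₁[t₂], and let S^T be the partial operator mapping each tree of the form t₁·(t₂·t₃) to t₁[t₂]·(t₁·t₃), with S^T₁ = ∂₁S^T and A₁ = ∂₁A. Then the near-equalities A₁·S^T ≈ S^T·S^T₁·A, A·S^T ≈ S^T₁·S^T·A₁, and S^T·S^T₁·S^T ≈ S^T₁·S^T·S^T₁ (products meaning 'left factor applied first') hold if and only if, for all coloured trees t₁, t₂, t₃: t₁[t₂·t₃] = t₁[t₂]·t₁[t₃], (t₁·t₂)[t₃] = t₁[t₂[t₃]], and t₁[t₂[t₃]] = t₁[t₂][t₁[t₃]]. -/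
/-- The twisted semi-commutation operator `S^T` associated with a binary (bracket)
operation on coloured trees: it maps `t₁·(t₂·t₃)` to `t₁[t₂]·(t₁·t₃)`. -/
def opST (op : CTree → CTree → CTree) : PMap
  | .node t₁ (.node t₂ t₃) => some (.node (op t₁ t₂) (.node t₁ t₃))
  | _ => none

/-!
Each of the six composites is defined exactly on the trees `t₁·(t₂·(t₃·t₄))`, and on such a
tree the two sides of each near-equality produce trees with the same right subtree. So each
near-equality amounts to the equality of the two left subtrees, which are the two sides of the
corresponding identity for the bracket.
-/

def rightCombMap (F : CTree → CTree → CTree → CTree → CTree) : PMap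
  | .node a (.node b (.node c d)) => some (F a b c d)
  | _ => none

theorem nearEq_rightCombMap_iff {F G : CTree → CTree → CTree → CTree → CTree} :
    NearEq (rightCombMap F) (rightCombMap G) ↔ ∀ a b c d, F a b c d = G a b c d := by
  constructor
  · intro h a b c d
    exact Option.some_inj.mp (h.2 (.node a (.node b (.node c d))) rfl rfl)
  · intro h
    obtain rfl : F = G := funext fun a => funext fun b => funext fun c => funext (h a b c)
    let x := CTree.leaf 1
    exact ⟨⟨.node x (.node x (.node x x)), rfl, rfl⟩, fun _ _ _ => rfl⟩

theorem forall_node_eq_node_iff {X X' : CTree → CTree → CTree → CTree}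
    {Y : CTree → CTree → CTree → CTree → CTree} :
    (∀ a b c d, CTree.node (X a b c) (Y a b c d) = .node (X' a b c) (Y a b c d)) ↔
      ∀ a b c, X a b c = X' a b c := by
  simp only [CTree.node.injEq, and_true]
  exact ⟨fun h a b c => h a b c (.leaf 1), fun h a b c _ => h a b c⟩

section Composites

variable (op : CTree → CTree → CTree)

theorem applyAt_opA_mul_opST :
    applyAt [true] opA * opST op =
      rightCombMap fun a b c d => .node (op a (.node b c)) (.node a d) := by
  funext t
  rcases t with _ | ⟨a, _ | ⟨b, _ | ⟨c, d⟩⟩⟩ <;> rfl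

theorem opST_mul_applyAt_opST_mul_opA :
    opST op * applyAt [true] (opST op) * opA =
      rightCombMap fun a b c d => .node (.node (op a b) (op a c)) (.node a d) := by
  funext t
  rcases t with _ | ⟨a, _ | ⟨b, _ | ⟨c, d⟩⟩⟩ <;> rfl

theorem opA_mul_opST :
    opA * opST op = rightCombMap fun a b c d => .node (op (.node a b) c) (.node (.node a b) d) := by
  funext t
  rcases t with _ | ⟨a, _ | ⟨b, _ | ⟨c, d⟩⟩⟩ <;> rfl

theorem applyAt_opST_mul_opST_mul_applyAt_opA :
    applyAt [true] (opST op) * opST op * applyAt [true] opA =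
      rightCombMap fun a b c d => .node (op a (op b c)) (.node (.node a b) d) := by
  funext t
  rcases t with _ | ⟨a, _ | ⟨b, _ | ⟨c, d⟩⟩⟩ <;> rfl

theorem opST_mul_applyAt_opST_mul_opST :
    opST op * applyAt [true] (opST op) * opST op =
      rightCombMap fun a b c d => .node (op (op a b) (op a c)) (.node (op a b) (.node a d)) := by
  funext t
  rcases t with _ | ⟨a, _ | ⟨b, _ | ⟨c, d⟩⟩⟩ <;> rfl

theorem applyAt_opST_mul_opST_mul_applyAt_opST :
    applyAt [true] (opST op) * opST op * applyAt [true] (opST op) =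
      rightCombMap fun a b c d => .node (op a (op b c)) (.node (op a b) (.node a d)) := by
  funext t
  rcases t with _ | ⟨a, _ | ⟨b, _ | ⟨c, d⟩⟩⟩ <;> rfl

end Composites

/-- Proposition 5.3 (i): for any binary operation `t₁,t₂ ↦ t₁[t₂]` on coloured
trees, the near-equalities `A₁·S^T ≈ S^T·S^T₁·A`, `A·S^T ≈ S^T₁·S^T·A₁`, and
`S^T·S^T₁·S^T ≈ S^T₁·S^T·S^T₁` (products meaning "left factor applied first") hold
if and only if, for all coloured trees `t₁, t₂, t₃`:
`t₁[t₂·t₃] = t₁[t₂]·t₁[t₃]`, `(t₁·t₂)[t₃] = t₁[t₂[t₃]]`, and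
`t₁[t₂[t₃]] = t₁[t₂][t₁[t₃]]`. -/
theorem stmt18 (op : CTree → CTree → CTree) :
    (NearEq (applyAt [true] opA * opST op) (opST op * applyAt [true] (opST op) * opA) ∧
     NearEq (opA * opST op) (applyAt [true] (opST op) * opST op * applyAt [true] opA) ∧
     NearEq (opST op * applyAt [true] (opST op) * opST op)
            (applyAt [true] (opST op) * opST op * applyAt [true] (opST op))) ↔
    (∀ t₁ t₂ t₃ : CTree,
      op t₁ (.node t₂ t₃) = .node (op t₁ t₂) (op t₁ t₃) ∧
      op (.node t₁ t₂) t₃ = op t₁ (op t₂ t₃) ∧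
      op t₁ (op t₂ t₃) = op (op t₁ t₂) (op t₁ t₃)) := by
  simp only [applyAt_opA_mul_opST, opST_mul_applyAt_opST_mul_opA, opA_mul_opST,
    applyAt_opST_mul_opST_mul_applyAt_opA, opST_mul_applyAt_opST_mul_opST,
    applyAt_opST_mul_opST_mul_applyAt_opST, nearEq_rightCombMap_iff, forall_node_eq_node_iff]
  simp only [← forall_and, eq_comm (a := op (op _ _) (op _ _))]
end
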